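/- arXiv:1208.2288 — 9 statements merged into one kernel-verified Lean document; each statement's English description precedes it below -/
import Mathlib

section
/- Every matrix polynomial $q \in \mathbb{C}^{a\times b}[z_1,\ldots,z_d]$ of total degree $t$ admits a factorization $q(z) = C_0 L_1(z) C_1 L_2(z) \cdots C_{t-1} L_t(z) C_t$, where each $C_i$ is a constant complex matrix of appropriate size and each $L_i(z)$ is a diagonal matrix whose diagonal entries all lie in $\{1, z_1, \ldots, z_d\}$. -/
/-!
Expand `q(z) = ∑_β Q_β z^β` over the finitely many exponents `β` occurring in `q`. A monomial
`z^β` of degree at most `t` is a product of `t` factors from `{1, z₁, …, z_d}`: its variables,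
listed with multiplicity, followed by `1`s. So take `C₀ = [Q_β₁ ⋯ Q_β_K]`, let the `r`-th
diagonal factor carry the `r`-th factor of `z^β` on the block of `β`, put identities in the
middle, and let `C_t` be the column of stacked identities, which adds up the blocks.
-/

open MvPolynomial

theorem List.prod_univ_getElem?_elim {α M : Type*} [CommMonoid M] (f : α → M) :
    ∀ (l : List α) {t : ℕ}, l.length ≤ t →
      ∏ r : Fin t, (l[(r : ℕ)]?).elim 1 f = (l.map f).prod
  | [], _, _ => by simp
  | x :: l, t + 1, h => by
    simp only [Fin.prod_univ_succ, Fin.val_zero, Fin.val_succ, List.getElem?_cons_zero,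
      List.getElem?_cons_succ, List.prod_univ_getElem?_elim f l (Nat.le_of_succ_le_succ h)]
    simp

theorem Finsupp.prod_map_toList_toMultiset {σ M : Type*} [CommMonoid M] (β : σ →₀ ℕ)
    (f : σ → M) : (β.toMultiset.toList.map f).prod = β.prod fun v e => f v ^ e := by
  rw [Multiset.prod_map_toList, toMultiset_map, prod_toMultiset,
    prod_mapDomain_index (fun _ => pow_zero _) (fun _ _ _ => pow_add _ _ _)]

namespace MvPolynomial

variable {σ R : Type*} [CommSemiring R]

/-- The `r`-th variable of the monomial `X^β`, variables being listed with multiplicity in some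
fixed order; `none` once `r` exceeds the degree of `β`. -/
noncomputable def monomialLetter (β : σ →₀ ℕ) (r : ℕ) : Option σ :=
  β.toMultiset.toList[r]?

theorem eval_monomial_one_eq_prod_monomialLetter (z : σ → R) {β : σ →₀ ℕ} {t : ℕ}
    (hβ : (β.sum fun _ e => e) ≤ t) :
    eval z (monomial β 1) = ∏ r : Fin t, (monomialLetter β r).elim 1 z := by
  have hlen : β.toMultiset.toList.length ≤ t := by
    rw [Multiset.length_toList, Finsupp.card_toMultiset]
    exact hβ
  simp only [monomialLetter]
  rw [List.prod_univ_getElem?_elim z _ hlen, Finsupp.prod_map_toList_toMultiset, eval_monomial,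
    one_mul]

end MvPolynomial

namespace Matrix

def stackedOne (k n R : Type*) [DecidableEq n] [Zero R] [One R] : Matrix (k × n) n R :=
  (1 : Matrix n n R).submatrix Prod.snd id

section MonomialExpansion

variable {m n σ R : Type*} [Fintype m] [Fintype n] [DecidableEq σ] [CommSemiring R]

def monomialSupport (q : Matrix m n (MvPolynomial σ R)) : Finset (σ →₀ ℕ) :=
  Finset.univ.biUnion fun i => Finset.univ.biUnion fun j => (q i j).support

theorem mem_monomialSupport {q : Matrix m n (MvPolynomial σ R)} {β : σ →₀ ℕ} :
    β ∈ q.monomialSupport ↔ ∃ i j, β ∈ (q i j).support := by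
  simp [monomialSupport]

theorem support_subset_monomialSupport (q : Matrix m n (MvPolynomial σ R)) (i : m) (j : n) :
    (q i j).support ⊆ q.monomialSupport := fun _ hβ =>
  mem_monomialSupport.2 ⟨i, j, hβ⟩

theorem degree_le_of_mem_monomialSupport {q : Matrix m n (MvPolynomial σ R)} {t : ℕ}
    (hq : ∀ i j, (q i j).totalDegree ≤ t) {β : σ →₀ ℕ}
    (hβ : β ∈ q.monomialSupport) : (β.sum fun _ e => e) ≤ t := by
  obtain ⟨i, j, hβ⟩ := mem_monomialSupport.1 hβ
  exact (le_totalDegree hβ).trans (hq i j)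

def coeffMatrix (q : Matrix m n (MvPolynomial σ R)) : Matrix m (q.monomialSupport × n) R :=
  of fun i p => coeff p.1 (q i p.2)

variable [DecidableEq n]

theorem map_eval_eq_coeffMatrix_mul_diagonal_mul (q : Matrix m n (MvPolynomial σ R))
    (z : σ → R) :
    q.map (eval z) = q.coeffMatrix *
      diagonal (fun p : q.monomialSupport × n => eval z (monomial p.1.1 1)) *
        stackedOne q.monomialSupport n R := by
  ext i j
  calc eval z (q i j)
      = ∑ β ∈ q.monomialSupport, coeff β (q i j) * eval z (monomial β 1) := by
        conv_lhs => rw [as_sum (q i j), Finset.sum_subset (support_subset_monomialSupport q i j)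
          (fun β _ hβ => by rw [notMem_support_iff.mp hβ, monomial_zero])]
        simp [eval_monomial]
    _ = _ := by
        rw [mul_apply, ← Finset.sum_coe_sort, Fintype.sum_prod_type]
        refine Finset.sum_congr rfl fun β _ => ?_
        simp only [mul_diagonal, coeffMatrix, stackedOne, of_apply, submatrix_apply, id,
          one_apply, mul_ite, mul_one, mul_zero, Finset.sum_ite_eq', Finset.mem_univ, if_true]

theorem map_eval_eq_coeffMatrix_mul_diagonal_prod_mul {q : Matrix m n (MvPolynomial σ R)}
    {t : ℕ} (hq : ∀ i j, (q i j).totalDegree ≤ t) (z : σ → R) :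
    q.map (eval z) = q.coeffMatrix * diagonal (fun p : q.monomialSupport × n =>
      ∏ r : Fin t, (monomialLetter p.1.1 r).elim 1 z) * stackedOne q.monomialSupport n R := by
  rw [map_eval_eq_coeffMatrix_mul_diagonal_mul]
  congr
  funext p
  exact eval_monomial_one_eq_prod_monomialLetter z (degree_le_of_mem_monomialSupport hq p.1.2)

end MonomialExpansion

noncomputable def extendByZero {m n m' n' R : Type*} [Zero R] (f : m → m') (g : n → n')
    (M : Matrix m n R) : Matrix m' n' R :=
  of fun i' j' => Function.extend g (fun j => Function.extend f (M · j) 0 i') 0 j'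

theorem extendByZero_mul_diagonal_mul_extendByZero_apply {m n k ι R : Type*} [Fintype k]
    [DecidableEq k] [Fintype ι] [DecidableEq ι] [NonUnitalNonAssocSemiring R] {f : m → ι}
    {g : n → ι} {h : k → ι} (hf : f.Injective) (hg : g.Injective) (hh : h.Injective)
    (A : Matrix m k R) (B : Matrix k n R) (D : ι → R) (i : m) (j : n) :
    (extendByZero f h A * diagonal D * extendByZero h g B) (f i) (g j) =
      (A * diagonal (D ∘ h) * B) i j := by
  simp only [mul_apply, diagonal_apply, mul_ite, mul_zero]
  refine (Fintype.sum_of_injective h hh _ _ (fun y hy => ?_) (fun y => ?_)).symm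
  · have hy' : ¬∃ x, h x = y := hy
    simp [extendByZero, Function.extend_apply' _ _ _ hy']
  · simp [extendByZero, hf.extend_apply, hg.extend_apply, hh.extend_apply]

theorem prod_map_finRange_diagonal {n R : Type*} [Fintype n] [DecidableEq n] [CommSemiring R]
    {t : ℕ} (D : Fin t → n → R) :
    ((List.finRange t).map fun r => diagonal (D r)).prod = diagonal fun x => ∏ r, D r x := by
  rw [← Finset.prod_fn, ← List.prod_ofFn, List.ofFn_eq_map]
  change _ = diagonalRingHom n R _
  rw [map_list_prod, List.map_map]
  rfl

end Matrix

section OuterFactors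

variable {M : Type*} [Monoid M]

def outerFactors {t : ℕ} (A B : M) (s : Fin (t + 1)) : M :=
  (if s = 0 then A else 1) * (if s = Fin.last t then B else 1)

theorem outerFactors_succ {t : ℕ} (A B : M) (s : Fin (t + 1)) :
    outerFactors A B s.succ = outerFactors 1 B s := by
  simp [outerFactors, Fin.succ_ne_zero, ← Fin.succ_last]

theorem outerFactors_zero_mul_prod_map_finRange {t : ℕ} (A B : M) (X : Fin t → M) :
    outerFactors (t := t) A B 0 *
        ((List.finRange t).map fun r => X r * outerFactors A B r.succ).prod =
      A * ((List.finRange t).map X).prod * B := by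
  induction t generalizing A with
  | zero => simp [outerFactors]
  | succ t ih =>
    have hA : outerFactors (t := t + 1) A B 0 = A := by simp [outerFactors]
    have htail := ih 1 fun r => X r.succ
    rw [one_mul] at htail
    simp only [List.finRange_succ, List.map_cons, List.map_map, List.prod_cons, hA,
      Function.comp_def, outerFactors_succ, mul_assoc]
    rw [htail]

end OuterFactors

/-- The factors are padded with zeros to `N × N` matrices; `q(z)` is the upper-left `a × b`
corner of the product. -/
theorem matrix_polynomial_factorization {d a b t : ℕ}
    (q : Matrix (Fin a) (Fin b) (MvPolynomial (Fin d) ℂ))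
    (hq : ∀ i j, (q i j).totalDegree ≤ t) :
    ∃ (N : ℕ) (ha : a ≤ N) (hb : b ≤ N)
      (C : Fin (t + 1) → Matrix (Fin N) (Fin N) ℂ)
      (ℓ : Fin t → Fin N → Option (Fin d)),
      ∀ (z : Fin d → ℂ) (i : Fin a) (j : Fin b),
        MvPolynomial.eval z (q i j) =
          (C 0 * ((List.finRange t).map (fun r : Fin t =>
              Matrix.diagonal (fun m : Fin N =>
                match ℓ r m with
                  | none => (1 : ℂ)
                  | some v => z v) *
                C r.succ)).prod)
            (Fin.castLE ha i) (Fin.castLE hb j) := by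
  let K := Fintype.card (q.monomialSupport × Fin b)
  have hK : K ≤ a + b + K := by omega
  let h : q.monomialSupport × Fin b → Fin (a + b + K) := Fin.castLE hK ∘ Fintype.equivFin _
  have hh : h.Injective := (Fin.castLE_injective hK).comp (Fintype.equivFin _).injective
  refine ⟨a + b + K, by omega, by omega,
    outerFactors (q.coeffMatrix.extendByZero (Fin.castLE (by omega)) h)
      ((Matrix.stackedOne q.monomialSupport (Fin b) ℂ).extendByZero h (Fin.castLE (by omega))),
    fun r => Function.extend h (fun p => monomialLetter p.1.1 r) fun _ => none,
    fun z i j => ?_⟩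
  have hmatch : ∀ o : Option (Fin d),
      (match o with | none => (1 : ℂ) | some v => z v) = o.elim 1 z := by
    rintro (_ | _) <;> rfl
  simp only [hmatch]
  rw [outerFactors_zero_mul_prod_map_finRange, Matrix.prod_map_finRange_diagonal,
    Matrix.extendByZero_mul_diagonal_mul_extendByZero_apply (Fin.castLE_injective _)
      (Fin.castLE_injective _) hh]
  simp only [Function.comp_def, hh.extend_apply]
  exact congrFun₂ (Matrix.map_eval_eq_coeffMatrix_mul_diagonal_prod_mul hq z) i j
end

section
/- Every polynomial $p \in \mathbb{C}[z_1, \ldots, z_d]$ with $p(0) = 1$ admits a determinantal representation $p(z) = \det(I_{|n|} - K Z_n)$ for some $n = (n_1,\ldots,n_d) \in \mathbb{N}_0^d$ and some complex matrix $K \in \mathbb{C}^{|n| \times |n|}$, where $Z_n = \bigoplus_{i=1}^d z_i I_{n_i}$ and $|n| = n_1 + \cdots + n_d$. -/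
/-!
For a colouring `c` of a finite index set write `Z = diag (z (c k))`. Every polynomial `q` has a
transfer-function realization `q z = q 0 + Cᵀ Z (1 - A Z)⁻¹ B` with `det (1 - A Z) = 1`: constants
have the empty one, sums take the direct sum of realizations, and multiplying by `X i` adds one
state of colour `i` that drives the old realization through `B`. The matrix determinant lemma gives
`det (1 - (A - B Cᵀ) Z) = 1 + q z - q 0`, and grouping the index set by colour turns `Z` into `Zₙ`.
-/

open Matrix MvPolynomial

namespace Matrix

variable {m n R : Type*} [Fintype m] [DecidableEq m] [Fintype n] [DecidableEq n] [CommRing R]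

theorem det_one_add_vecMulVec (u v : m → R) : det (1 + vecMulVec u v) = 1 + v ⬝ᵥ u := by
  rw [vecMulVec_eq Unit, det_one_add_replicateCol_mul_replicateRow]

theorem det_add_vecMulVec {M : Matrix m m R} (hM : IsUnit M.det) (u v : m → R) :
    det (M + vecMulVec u v) = det M * (1 + v ⬝ᵥ M⁻¹ *ᵥ u) := by
  rw [← det_one_add_vecMulVec, ← det_mul, Matrix.mul_add, Matrix.mul_one, mul_vecMulVec,
    mulVec_mulVec, mul_nonsing_inv _ hM, one_mulVec]

theorem one_sub_fromBlocks_zero₂₁_mul_diagonal (A : Matrix m m R) (B : Matrix m n R)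
    (D : Matrix n n R) (w₁ : m → R) (w₂ : n → R) :
    1 - fromBlocks A B 0 D * diagonal (Sum.elim w₁ w₂) =
      fromBlocks (1 - A * diagonal w₁) (-(B * diagonal w₂)) 0 (1 - D * diagonal w₂) := by
  rw [← fromBlocks_diagonal, fromBlocks_multiply]
  ext (i | i) (j | j) <;> simp [one_apply]

end Matrix

namespace MvPolynomial

variable {σ R : Type*} [CommRing R]

structure Realization (q : MvPolynomial σ R) where
  ι : Type
  [instFintype : Fintype ι]
  [instDecidableEq : DecidableEq ι]
  color : ι → σ
  A : Matrix ι ι R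
  B : ι → R
  C : ι → R
  det_eq_one : ∀ z : σ → R, det (1 - A * diagonal (z ∘ color)) = 1
  eval_eq : ∀ z : σ → R, eval z q =
    constantCoeff q + (C ᵥ* diagonal (z ∘ color)) ⬝ᵥ (1 - A * diagonal (z ∘ color))⁻¹ *ᵥ B

namespace Realization

attribute [instance] instFintype instDecidableEq

variable {p q : MvPolynomial σ R}

theorem isUnit_det (r : Realization q) (z : σ → R) :
    IsUnit (det (1 - r.A * diagonal (z ∘ r.color))) :=
  (r.det_eq_one z).symm ▸ isUnit_one

noncomputable section

def const (a : R) : Realization (MvPolynomial.C a : MvPolynomial σ R) where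
  ι := Empty
  color := Empty.elim
  A := 0
  B := 0
  C := 0
  det_eq_one _ := det_isEmpty
  eval_eq _ := by simp

def add (r : Realization p) (s : Realization q) : Realization (p + q) where
  ι := r.ι ⊕ s.ι
  color := Sum.elim r.color s.color
  A := fromBlocks r.A 0 0 s.A
  B := Sum.elim r.B s.B
  C := Sum.elim r.C s.C
  det_eq_one z := by
    rw [Sum.comp_elim, one_sub_fromBlocks_zero₂₁_mul_diagonal, det_fromBlocks_zero₂₁,
      r.det_eq_one, s.det_eq_one, one_mul]
  eval_eq z := by
    rw [Sum.comp_elim, one_sub_fromBlocks_zero₂₁_mul_diagonal, inv_fromBlocks_zero₂₁_of_isUnit_iff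
        _ _ _ (by simp [isUnit_iff_isUnit_det, r.isUnit_det, s.isUnit_det]),
      ← fromBlocks_diagonal, vecMul_fromBlocks, fromBlocks_mulVec]
    simp [sumElim_dotProduct_sumElim, r.eval_eq z, s.eval_eq z, add_add_add_comm]

def mulX (r : Realization q) (i : σ) : Realization (q * X i) where
  ι := r.ι ⊕ Unit
  color := Sum.elim r.color fun _ => i
  A := fromBlocks r.A (replicateCol Unit r.B) 0 0
  B := Sum.elim 0 1
  C := Sum.elim r.C fun _ => constantCoeff q
  det_eq_one z := by
    rw [Sum.comp_elim, one_sub_fromBlocks_zero₂₁_mul_diagonal, det_fromBlocks_zero₂₁,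
      r.det_eq_one]
    simp
  eval_eq z := by
    have hB (N : Matrix r.ι r.ι R) :
        (N * (replicateCol Unit r.B * diagonal (z ∘ fun _ : Unit => i))) *ᵥ 1 = z i • N *ᵥ r.B := by
      rw [← mulVec_mulVec, ← mulVec_smul]
      congr 1
      ext
      simp [mulVec, mul_diagonal, mul_comm]
    rw [Sum.comp_elim, one_sub_fromBlocks_zero₂₁_mul_diagonal, inv_fromBlocks_zero₂₁_of_isUnit_iff
        _ _ _ (by simp [isUnit_iff_isUnit_det, r.isUnit_det]),
      ← fromBlocks_diagonal, vecMul_fromBlocks, fromBlocks_mulVec]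
    simp [sumElim_dotProduct_sumElim, vecMul_diagonal, hB, r.eval_eq z, mul_comm, mul_add,
      add_comm]

end

def feedback (r : Realization q) : Matrix r.ι r.ι R :=
  r.A - vecMulVec r.B r.C

theorem det_one_sub_feedback_mul_diagonal (r : Realization q) (z : σ → R) :
    det (1 - r.feedback * diagonal (z ∘ r.color)) = 1 + (eval z q - constantCoeff q) := by
  have hsplit : 1 - r.feedback * diagonal (z ∘ r.color) = 1 - r.A * diagonal (z ∘ r.color) +
      vecMulVec r.B (r.C ᵥ* diagonal (z ∘ r.color)) := by
    rw [feedback, Matrix.sub_mul, vecMulVec_mul]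
    abel
  rw [hsplit, det_add_vecMulVec (r.isUnit_det z), r.det_eq_one, one_mul, r.eval_eq z,
    add_sub_cancel_left]

end Realization

theorem nonempty_realization (q : MvPolynomial σ R) : Nonempty (Realization q) := by
  induction q using MvPolynomial.induction_on with
  | C a => exact ⟨Realization.const a⟩
  | add p q hp hq => exact ⟨hp.some.add hq.some⟩
  | mul_X q i hq => exact ⟨hq.some.mulX i⟩

end MvPolynomial

theorem Matrix.exists_det_one_sub_mul_diagonal_sigma_eq {ι σ R : Type*} [Fintype ι]
    [DecidableEq ι] [Fintype σ] [DecidableEq σ] [CommRing R] (f : ι → σ) (K : Matrix ι ι R) :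
    ∃ (n : σ → ℕ) (K' : Matrix ((i : σ) × Fin (n i)) ((i : σ) × Fin (n i)) R),
      ∀ z : σ → R, det (1 - K' * diagonal (fun x : (i : σ) × Fin (n i) => z x.1)) =
        det (1 - K * diagonal (z ∘ f)) := by
  let e : ((i : σ) × Fin (Fintype.card {x // f x = i})) ≃ ι :=
    (Equiv.sigmaCongrRight fun i => (Fintype.equivFin _).symm).trans (Equiv.sigmaFiberEquiv f)
  have hfe (x) : f (e x) = x.1 := ((Fintype.equivFin {x // f x = _}).symm x.2).2
  refine ⟨_, K.submatrix e e, fun z => ?_⟩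
  have hdiag : diagonal (fun x : (i : σ) × Fin _ => z x.1) = (diagonal (z ∘ f)).submatrix e e := by
    rw [submatrix_diagonal_equiv]
    simp [Function.comp_def, hfe]
  have hsub : 1 - K.submatrix e e * diagonal (fun x : (i : σ) × Fin _ => z x.1) =
      (1 - K * diagonal (z ∘ f)).submatrix e e := by
    rw [hdiag, submatrix_mul_equiv, ← submatrix_one_equiv e]
    rfl
  rw [hsub, det_submatrix_equiv_self]

/-- Every polynomial `p ∈ ℂ[z₁,…,z_d]` with `p(0) = 1` admits a determinantal
representation `p(z) = det (I - K Zₙ)` for some `n ∈ ℕ₀^d` and some complex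
matrix `K`, where `Zₙ = ⊕ᵢ zᵢ I_{nᵢ}` is the diagonal matrix with `zᵢ`
repeated `nᵢ` times on the diagonal. -/
theorem exists_determinantal_representation {d : ℕ}
    (p : MvPolynomial (Fin d) ℂ) (hp : MvPolynomial.eval (fun _ => (0 : ℂ)) p = 1) :
    ∃ (n : Fin d → ℕ) (K : Matrix ((i : Fin d) × Fin (n i)) ((i : Fin d) × Fin (n i)) ℂ),
      ∀ z : Fin d → ℂ,
        MvPolynomial.eval z p =
          (1 - K * Matrix.diagonal (fun x : (i : Fin d) × Fin (n i) => z x.1)).det := by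
  obtain ⟨r⟩ := nonempty_realization p
  obtain ⟨n, K, hK⟩ := exists_det_one_sub_mul_diagonal_sigma_eq r.color r.feedback
  refine ⟨n, K, fun z => ?_⟩
  rw [hK, r.det_one_sub_feedback_mul_diagonal, ← eval_zero', hp, add_sub_cancel]
end

section
/- Let $G = \begin{bmatrix} G_{11} & G_{12} \\ G_{21} & G_{22} \end{bmatrix}$ be a contraction ($\|G\| \le 1$ in operator norm) with square diagonal blocks, such that $I - G_{11}$ is invertible. Then $K = G_{22} + G_{21}(I - G_{11})^{-1} G_{12}$ is a contraction. -/
/-!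
For a vector `u`, put `w = (1 - G₁₁)⁻¹ G₁₂ u`. Then `G (w, u) = (w, K u)`, so the contractivity
of `G` gives `‖w‖² + ‖K u‖² ≤ ‖w‖² + ‖u‖²`, i.e. `‖K u‖ ≤ ‖u‖`.
-/

open scoped Matrix.Norms.L2Operator

lemma EuclideanSpace.norm_sq_equiv_symm_sumElim {𝕜 m n : Type*} [RCLike 𝕜] [Fintype m]
    [Fintype n] (w : m → 𝕜) (u : n → 𝕜) :
    ‖(EuclideanSpace.equiv (m ⊕ n) 𝕜).symm (Sum.elim w u)‖ ^ 2 =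
      ‖(EuclideanSpace.equiv m 𝕜).symm w‖ ^ 2 + ‖(EuclideanSpace.equiv n 𝕜).symm u‖ ^ 2 := by
  simp [EuclideanSpace.norm_sq_eq, Fintype.sum_sum_type]

namespace Matrix

section L2OpNorm

variable {𝕜 : Type*} [RCLike 𝕜] {l m n : Type*} [Fintype l] [Fintype m] [Fintype n]

lemma l2_opNorm_le_of_mulVec [DecidableEq n] {A : Matrix m n 𝕜} {c : ℝ} (hc : 0 ≤ c)
    (h : ∀ x : n → 𝕜,
      ‖(EuclideanSpace.equiv m 𝕜).symm (A *ᵥ x)‖ ≤ c * ‖(EuclideanSpace.equiv n 𝕜).symm x‖) :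
    ‖A‖ ≤ c :=
  ContinuousLinearMap.opNorm_le_bound _ hc fun x => h (WithLp.ofLp x)

lemma norm_le_of_l2_opNorm_le_one_of_mulVec_sumElim [DecidableEq l] [DecidableEq n]
    {M : Matrix (l ⊕ m) (l ⊕ n) 𝕜} (hM : ‖M‖ ≤ 1) {w : l → 𝕜} {u : n → 𝕜} {v : m → 𝕜}
    (hv : M *ᵥ Sum.elim w u = Sum.elim w v) :
    ‖(EuclideanSpace.equiv m 𝕜).symm v‖ ≤ ‖(EuclideanSpace.equiv n 𝕜).symm u‖ := by
  have hle : ‖(EuclideanSpace.equiv (l ⊕ m) 𝕜).symm (Sum.elim w v)‖ ≤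
      ‖(EuclideanSpace.equiv (l ⊕ n) 𝕜).symm (Sum.elim w u)‖ :=
    calc _ = ‖(EuclideanSpace.equiv (l ⊕ m) 𝕜).symm (M *ᵥ Sum.elim w u)‖ := by rw [hv]
      _ ≤ ‖M‖ * ‖(EuclideanSpace.equiv (l ⊕ n) 𝕜).symm (Sum.elim w u)‖ :=
        M.l2_opNorm_mulVec ((EuclideanSpace.equiv (l ⊕ n) 𝕜).symm (Sum.elim w u))
      _ ≤ _ := mul_le_of_le_one_left (norm_nonneg _) hM
  have hsq := pow_le_pow_left₀ (norm_nonneg _) hle 2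
  rw [EuclideanSpace.norm_sq_equiv_symm_sumElim, EuclideanSpace.norm_sq_equiv_symm_sumElim,
    add_le_add_iff_left] at hsq
  exact le_of_sq_le_sq hsq (norm_nonneg _)

end L2OpNorm

lemma fromBlocks_mulVec_sumElim_inv_one_sub {R : Type*} [CommRing R] {m n p : Type*}
    [Fintype m] [DecidableEq m] [Fintype n] {A : Matrix m m R} (B : Matrix m n R)
    (C : Matrix p m R) (D : Matrix p n R) (hA : IsUnit (1 - A)) (u : n → R) :
    fromBlocks A B C D *ᵥ Sum.elim ((1 - A)⁻¹ *ᵥ (B *ᵥ u)) u =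
      Sum.elim ((1 - A)⁻¹ *ᵥ (B *ᵥ u)) ((D + C * (1 - A)⁻¹ * B) *ᵥ u) := by
  set w := (1 - A)⁻¹ *ᵥ (B *ᵥ u)
  have hw : (1 - A) *ᵥ w = B *ᵥ u := by
    rw [mulVec_mulVec, mul_nonsing_inv _ ((isUnit_iff_isUnit_det _).mp hA), one_mulVec]
  rw [sub_mulVec, one_mulVec, sub_eq_iff_eq_add'] at hw
  rw [fromBlocks_mulVec, Sum.elim_comp_inl, Sum.elim_comp_inr, ← hw, add_mulVec,
    ← mulVec_mulVec, ← mulVec_mulVec, add_comm (C *ᵥ w)]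

end Matrix

/-- If `G = [G₁₁ G₁₂; G₂₁ G₂₂]` is a contraction in the operator norm and
`I - G₁₁` is invertible, then the closed-loop map
`K = G₂₂ + G₂₁ (I - G₁₁)⁻¹ G₁₂` is a contraction. -/
theorem closed_loop_contraction {m n : ℕ}
    (G11 : Matrix (Fin m) (Fin m) ℂ) (G12 : Matrix (Fin m) (Fin n) ℂ)
    (G21 : Matrix (Fin n) (Fin m) ℂ) (G22 : Matrix (Fin n) (Fin n) ℂ)
    (hG : ‖Matrix.fromBlocks G11 G12 G21 G22‖ ≤ 1)
    (hinv : IsUnit (1 - G11)) :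
    ‖G22 + G21 * (1 - G11)⁻¹ * G12‖ ≤ 1 :=
  Matrix.l2_opNorm_le_of_mulVec zero_le_one fun u => by
    rw [one_mul]
    exact Matrix.norm_le_of_l2_opNorm_le_one_of_mulVec_sumElim hG
      (Matrix.fromBlocks_mulVec_sumElim_inv_one_sub G12 G21 G22 hinv u)
end

section
/- Let $K$ be a contractive $N \times N$ complex matrix and let $Z$ be a diagonal matrix with entries in the open unit disk. Then $\det(Z - K^*) = \det(I - KZ) \cdot \det(-K^* + \sqrt{I - K^*K}\, Z (I - KZ)^{-1} \sqrt{I - KK^*})$. -/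
/-!
Write `D = √(1 - KᴴK)` and `D' = √(1 - KKᴴ)`. Since `Kᴴ (1 - KKᴴ) = (1 - KᴴK) Kᴴ`, the functional
calculus gives `Kᴴ D' = D Kᴴ`, and with it `D θ = (Z - Kᴴ) (1 - KZ)⁻¹ D'` for the matrix `θ` on the
right-hand side. Sylvester's identity `det (1 - KᴴK) = det (1 - KKᴴ)` gives `det D = det D'`, so
the formula follows by cancelling `det D` as soon as `‖K‖ < 1`. Since `‖Z‖ < 1`, the matrix
`1 - KZ` stays invertible on the closed unit ball, where both sides are therefore continuous in
`K`; the closed ball being the closure of the open one, the formula extends to `‖K‖ ≤ 1`.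
-/

open scoped Matrix Matrix.Norms.L2Operator ComplexOrder

/-- The positive semidefinite square root of a positive semidefinite matrix
(the definition removed from Mathlib, restored with its old meaning). -/
noncomputable def Matrix.PosSemidef.sqrt {n 𝕜 : Type*} [Fintype n] [RCLike 𝕜] [DecidableEq n]
    {A : Matrix n n 𝕜} (hA : A.PosSemidef) : Matrix n n 𝕜 :=
  (hA.1.eigenvectorUnitary : Matrix n n 𝕜) *
    Matrix.diagonal ((↑) ∘ (fun x : ℝ => Real.sqrt x) ∘ hA.1.eigenvalues) *
    (star hA.1.eigenvectorUnitary : Matrix n n 𝕜)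

open scoped MatrixOrder Polynomial

theorem SemiconjBy.cfc_of_finite_spectrum {A : Type*} [Ring A] [StarRing A] [TopologicalSpace A]
    [Algebra ℝ A] [ContinuousFunctionalCalculus ℝ A IsSelfAdjoint] {a b x : A}
    (h : SemiconjBy x a b) (ha : IsSelfAdjoint a) (hb : IsSelfAdjoint b)
    (ha' : (spectrum ℝ a).Finite) (hb' : (spectrum ℝ b).Finite) (f : ℝ → ℝ) :
    SemiconjBy x (cfc f a) (cfc f b) := by
  classical
  obtain ⟨p, hp⟩ : ∃ p : ℝ[X], Set.EqOn f p.eval (spectrum ℝ a ∪ spectrum ℝ b) :=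
    ⟨Lagrange.interpolate (ha'.union hb').toFinset id f, fun y hy =>
      (Lagrange.eval_interpolate_at_node f (Set.injOn_id _) (by simpa using hy)).symm⟩
  rw [cfc_congr (hp.mono Set.subset_union_left), cfc_congr (hp.mono Set.subset_union_right),
    cfc_polynomial p a, cfc_polynomial p b]
  clear hp
  induction p using Polynomial.induction_on' with
  | add p q hp hq => simpa using hp.add_right hq
  | monomial k c =>
    simpa only [Polynomial.aeval_monomial] using
      SemiconjBy.mul_right (Algebra.commutes c x).symm (h.pow_right k)

theorem CStarAlgebra.one_sub_star_mul_self_nonneg {A : Type*} [CStarAlgebra A] [PartialOrder A]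
    [StarOrderedRing A] {a : A} (ha : ‖a‖ ≤ 1) : 0 ≤ 1 - star a * a := by
  rw [sub_nonneg, ← CStarAlgebra.norm_le_one_iff_of_nonneg _ (star_mul_self_nonneg a),
    CStarRing.norm_star_mul_self]
  exact mul_le_one₀ ha (norm_nonneg a) ha

theorem CStarAlgebra.one_sub_mul_star_self_nonneg {A : Type*} [CStarAlgebra A] [PartialOrder A]
    [StarOrderedRing A] {a : A} (ha : ‖a‖ ≤ 1) : 0 ≤ 1 - a * star a := by
  simpa using one_sub_star_mul_self_nonneg (a := star a) (by rwa [norm_star])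

theorem isUnit_one_sub_mul_of_norm_le_one_of_norm_lt_one {R : Type*} [NormedRing R]
    [HasSummableGeomSeries R] {a b : R} (ha : ‖a‖ ≤ 1) (hb : ‖b‖ < 1) : IsUnit (1 - a * b) :=
  isUnit_one_sub_of_norm_lt_one <| (norm_mul_le a b).trans_lt <|
    mul_lt_one_of_nonneg_of_lt_one_right ha (norm_nonneg b) hb

namespace Matrix

variable {n : Type*} [Fintype n] [DecidableEq n]

theorem PosSemidef.sqrt_eq_cfcSqrt {𝕜 : Type*} [RCLike 𝕜] {A : Matrix n n 𝕜}
    (hA : A.PosSemidef) : hA.sqrt = CFC.sqrt A := by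
  rw [CFC.sqrt_eq_cfc, cfc_nnreal_eq_real _ A hA.nonneg, hA.1.cfc_eq]
  simp only [IsHermitian.cfc, PosSemidef.sqrt, Unitary.conjStarAlgAut_apply]
  congr 3
  funext i
  simp [Real.coe_sqrt, Real.coe_toNNReal', hA.eigenvalues_nonneg i]

theorem one_sub_conjTranspose_mul_self_nonneg {K : Matrix n n ℂ} (hK : ‖K‖ ≤ 1) :
    0 ≤ 1 - Kᴴ * K :=
  CStarAlgebra.one_sub_star_mul_self_nonneg hK

theorem one_sub_mul_conjTranspose_self_nonneg {K : Matrix n n ℂ} (hK : ‖K‖ ≤ 1) :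
    0 ≤ 1 - K * Kᴴ :=
  CStarAlgebra.one_sub_mul_star_self_nonneg hK

theorem conjTranspose_mul_sqrt_one_sub_mul_conjTranspose {K : Matrix n n ℂ} (hK : ‖K‖ ≤ 1) :
    Kᴴ * CFC.sqrt (1 - K * Kᴴ) = CFC.sqrt (1 - Kᴴ * K) * Kᴴ := by
  have h1 := one_sub_conjTranspose_mul_self_nonneg hK
  have h2 := one_sub_mul_conjTranspose_self_nonneg hK
  rw [CFC.sqrt_eq_real_sqrt _ h1, CFC.sqrt_eq_real_sqrt _ h2, cfcₙ_eq_cfc, cfcₙ_eq_cfc]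
  refine SemiconjBy.cfc_of_finite_spectrum ?_ (.of_nonneg h2) (.of_nonneg h1)
    ((nonneg_iff_posSemidef.1 h2).1.spectrum_real_eq_range_eigenvalues ▸ Set.finite_range _)
    ((nonneg_iff_posSemidef.1 h1).1.spectrum_real_eq_range_eigenvalues ▸ Set.finite_range _) _
  simp only [SemiconjBy, Matrix.mul_sub, Matrix.sub_mul, Matrix.mul_one, Matrix.one_mul,
    Matrix.mul_assoc]

theorem det_sqrt_one_sub_conjTranspose_mul_self {K : Matrix n n ℂ} (hK : ‖K‖ ≤ 1) :
    (CFC.sqrt (1 - Kᴴ * K)).det = (CFC.sqrt (1 - K * Kᴴ)).det := by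
  rw [(nonneg_iff_posSemidef.1 (one_sub_conjTranspose_mul_self_nonneg hK)).det_sqrt,
    (nonneg_iff_posSemidef.1 (one_sub_mul_conjTranspose_self_nonneg hK)).det_sqrt,
    det_one_sub_mul_comm]

/-- The Sz.-Nagy–Foias characteristic function of `Kᴴ`, with the matrix `Z` in place of the
scalar variable. -/
noncomputable def nagyFoiasCharFun (K Z : Matrix n n ℂ) : Matrix n n ℂ :=
  -Kᴴ + CFC.sqrt (1 - Kᴴ * K) * Z * (1 - K * Z)⁻¹ * CFC.sqrt (1 - K * Kᴴ)

theorem sqrt_mul_nagyFoiasCharFun {K Z : Matrix n n ℂ} (hK : ‖K‖ ≤ 1)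
    (hKZ : IsUnit (1 - K * Z)) :
    CFC.sqrt (1 - Kᴴ * K) * nagyFoiasCharFun K Z =
      (Z - Kᴴ) * (1 - K * Z)⁻¹ * CFC.sqrt (1 - K * Kᴴ) := by
  have hD := CFC.sqrt_mul_sqrt_self _ (one_sub_conjTranspose_mul_self_nonneg hK)
  have hW := mul_nonsing_inv _ ((isUnit_iff_isUnit_det _).1 hKZ)
  have hDK := conjTranspose_mul_sqrt_one_sub_mul_conjTranspose hK
  rw [nagyFoiasCharFun]
  set D := CFC.sqrt (1 - Kᴴ * K)
  set D' := CFC.sqrt (1 - K * Kᴴ)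
  set W := 1 - K * Z with hW_def
  calc D * (-Kᴴ + D * Z * W⁻¹ * D') = -(Kᴴ * (W * W⁻¹) * D') + (D * D) * Z * W⁻¹ * D' := by
        rw [hW, Matrix.mul_one, hDK]
        noncomm_ring
    _ = (Z - Kᴴ) * W⁻¹ * D' := by
        rw [hD, hW_def]
        noncomm_ring

theorem det_sub_conjTranspose_eq_of_isUnit {K Z : Matrix n n ℂ} (hK : ‖K‖ ≤ 1)
    (hD : IsUnit (1 - Kᴴ * K)) (hKZ : IsUnit (1 - K * Z)) :
    (Z - Kᴴ).det = (1 - K * Z).det * (nagyFoiasCharFun K Z).det := by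
  have hdetD : (CFC.sqrt (1 - Kᴴ * K)).det ≠ 0 := by
    refine left_ne_zero_of_mul (b := (CFC.sqrt (1 - Kᴴ * K)).det) ?_
    rw [← det_mul, CFC.sqrt_mul_sqrt_self _ (one_sub_conjTranspose_mul_self_nonneg hK)]
    exact ((isUnit_iff_isUnit_det _).1 hD).ne_zero
  have hdetW : (1 - K * Z).det * (1 - K * Z)⁻¹.det = 1 := by
    rw [← det_mul, mul_nonsing_inv _ ((isUnit_iff_isUnit_det _).1 hKZ), det_one]
  have h := congrArg det (sqrt_mul_nagyFoiasCharFun hK hKZ)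
  rw [det_mul, det_mul, det_mul, ← det_sqrt_one_sub_conjTranspose_mul_self hK, mul_comm,
    mul_left_inj' hdetD] at h
  rw [h, mul_left_comm, hdetW, mul_one]

theorem continuousOn_nagyFoiasCharFun {Z : Matrix n n ℂ} (hZ : ‖Z‖ < 1) :
    ContinuousOn (nagyFoiasCharFun · Z) (Metric.closedBall 0 1) := by
  intro K hK
  have hD : ContinuousOn (fun K : Matrix n n ℂ => CFC.sqrt (1 - Kᴴ * K))
      (Metric.closedBall 0 1) :=
    CFC.continuousOn_sqrt.comp (by fun_prop) fun K hK =>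
      one_sub_conjTranspose_mul_self_nonneg (mem_closedBall_zero_iff.1 hK)
  have hD' : ContinuousOn (fun K : Matrix n n ℂ => CFC.sqrt (1 - K * Kᴴ))
      (Metric.closedBall 0 1) :=
    CFC.continuousOn_sqrt.comp (by fun_prop) fun K hK =>
      one_sub_mul_conjTranspose_self_nonneg (mem_closedBall_zero_iff.1 hK)
  have hW : ContinuousAt (fun K : Matrix n n ℂ => (1 - K * Z)⁻¹) K := by
    simp_rw [nonsing_inv_eq_ringInverse]
    exact (NormedRing.inverse_continuousAt (isUnit_one_sub_mul_of_norm_le_one_of_norm_lt_one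
      (mem_closedBall_zero_iff.1 hK) hZ).unit).comp_of_eq (by fun_prop) (IsUnit.unit_spec _).symm
  exact (by fun_prop : Continuous fun K : Matrix n n ℂ => -Kᴴ).continuousWithinAt.add
    ((((hD K hK).mul continuousWithinAt_const).mul hW.continuousWithinAt).mul (hD' K hK))

theorem det_sub_conjTranspose_eq_of_norm {K Z : Matrix n n ℂ} (hK : ‖K‖ ≤ 1) (hZ : ‖Z‖ < 1) :
    (Z - Kᴴ).det = (1 - K * Z).det * (nagyFoiasCharFun K Z).det := by
  refine Set.EqOn.of_subset_closure (f := fun K => (Z - Kᴴ).det)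
    (g := fun K => (1 - K * Z).det * (nagyFoiasCharFun K Z).det) ?_ ?_ ?_
    Metric.ball_subset_closedBall (closure_ball 0 one_ne_zero).ge (mem_closedBall_zero_iff.2 hK)
  · intro K hK
    rw [mem_ball_zero_iff] at hK
    refine det_sub_conjTranspose_eq_of_isUnit hK.le (isUnit_one_sub_of_norm_lt_one ?_)
      (isUnit_one_sub_mul_of_norm_le_one_of_norm_lt_one hK.le hZ)
    rw [← star_eq_conjTranspose, CStarRing.norm_star_mul_self]
    exact mul_lt_one_of_nonneg_of_lt_one_left (norm_nonneg K) hK hK.le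
  · exact (by fun_prop : Continuous fun K : Matrix n n ℂ => (Z - Kᴴ).det).continuousOn
  · exact (by fun_prop : Continuous fun K : Matrix n n ℂ => (1 - K * Z).det).continuousOn.mul
      (continuous_id.matrix_det.comp_continuousOn (continuousOn_nagyFoiasCharFun hZ))

end Matrix

/-- For a contraction `K` and a diagonal matrix `Z` with entries in the open
unit disk, `det (Z - K*) = det (I - K Z) ⬝ det (-K* + √(I-K*K) Z (I-KZ)⁻¹ √(I-KK*))`. -/
theorem det_diag_sub_star_eq {N : ℕ} (K : Matrix (Fin N) (Fin N) ℂ)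
    (hK : ‖K‖ ≤ 1)
    (h1 : (1 - Kᴴ * K).PosSemidef) (h2 : (1 - K * Kᴴ).PosSemidef)
    (z : Fin N → ℂ) (hz : ∀ j, ‖z j‖ < 1) :
    (Matrix.diagonal z - Kᴴ).det =
      (1 - K * Matrix.diagonal z).det *
        (-Kᴴ + h1.sqrt * Matrix.diagonal z * (1 - K * Matrix.diagonal z)⁻¹ * h2.sqrt).det := by
  have hZ : ‖Matrix.diagonal z‖ < 1 := by
    rw [Matrix.l2_opNorm_diagonal]
    exact (pi_norm_lt_iff one_pos).2 hz
  rw [h1.sqrt_eq_cfcSqrt, h2.sqrt_eq_cfcSqrt]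
  exact Matrix.det_sub_conjTranspose_eq_of_norm hK hZ
end

section
/- Let $d \ge 2$ be even and $s > d/2 - 1$. Define $p(z_1, \ldots, z_d) = (1+s)\sum_{m=1}^d z_m^2 - (\sum_{m=1}^d z_m)^2$. Then $\sup_{z \in \overline{\mathbb{D}}^d} |p(z)| = (1+s)d$. -/
/-!
Write `p(z) = zᵀ A z` with `A = (1 + s) I - J`, i.e. `p(z) = ∑ zᵢ ((1 + s) zᵢ - ∑ⱼ zⱼ)`.
Expanding the square gives `‖A z‖² = (1 + s)² ‖z‖² - (2 (1 + s) - d) |∑ zⱼ|²`, so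
`‖A z‖ ≤ (1 + s) ‖z‖` as soon as `d ≤ 2 (1 + s)`, and Cauchy–Schwarz yields
`|p(z)| ≤ (1 + s) ‖z‖² ≤ (1 + s) d` on the polydisk. For even `d` the alternating point
`(1, -1, …, 1, -1)` has `∑ zⱼ = 0` and attains this bound.
-/

open Finset

lemma sum_norm_smul_sub_sum_sq {ι E : Type*} [Fintype ι] [SeminormedAddCommGroup E]
    [InnerProductSpace ℝ E] (c : ℝ) (z : ι → E) :
    ∑ i, ‖c • z i - ∑ j, z j‖ ^ 2
      = c ^ 2 * ∑ i, ‖z i‖ ^ 2 + (Fintype.card ι - 2 * c) * ‖∑ j, z j‖ ^ 2 := by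
  simp_rw [norm_sub_sq_real, norm_smul, real_inner_smul_left, sum_add_distrib, sum_sub_distrib,
    ← mul_sum, ← sum_inner, real_inner_self_eq_norm_sq, mul_pow, Real.norm_eq_abs, sq_abs,
    ← mul_sum, sum_const, card_univ, nsmul_eq_mul]
  ring

lemma sum_norm_smul_sub_sum_sq_le {ι E : Type*} [Fintype ι] [SeminormedAddCommGroup E]
    [InnerProductSpace ℝ E] {c : ℝ} (hc : (Fintype.card ι : ℝ) ≤ 2 * c) (z : ι → E) :
    ∑ i, ‖c • z i - ∑ j, z j‖ ^ 2 ≤ c ^ 2 * ∑ i, ‖z i‖ ^ 2 := by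
  rw [sum_norm_smul_sub_sum_sq]
  nlinarith [sq_nonneg ‖∑ j, z j‖]

lemma mul_sum_sq_sub_sq_sum {ι R : Type*} [Fintype ι] [CommRing R] (c : R) (z : ι → R) :
    c * ∑ i, z i ^ 2 - (∑ i, z i) ^ 2 = ∑ i, z i * (c * z i - ∑ j, z j) := by
  rw [mul_sum, sq (∑ i, z i), sum_mul, ← sum_sub_distrib]
  exact sum_congr rfl fun i _ => by ring

lemma sum_mul_le_of_sum_sq_le {ι : Type*} (s : Finset ι) {a b : ι → ℝ} {c : ℝ} (hc : 0 ≤ c)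
    (hab : ∑ i ∈ s, b i ^ 2 ≤ c ^ 2 * ∑ i ∈ s, a i ^ 2) :
    ∑ i ∈ s, a i * b i ≤ c * ∑ i ∈ s, a i ^ 2 := by
  have ha : 0 ≤ ∑ i ∈ s, a i ^ 2 := sum_nonneg fun _ _ => sq_nonneg _
  calc ∑ i ∈ s, a i * b i ≤ √(∑ i ∈ s, a i ^ 2) * √(∑ i ∈ s, b i ^ 2) :=
        Real.sum_mul_le_sqrt_mul_sqrt s a b
    _ ≤ √(∑ i ∈ s, a i ^ 2) * √(c ^ 2 * ∑ i ∈ s, a i ^ 2) := by gcongr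
    _ = c * ∑ i ∈ s, a i ^ 2 := by
        rw [Real.sqrt_mul (sq_nonneg c), Real.sqrt_sq hc, mul_left_comm, Real.mul_self_sqrt ha]

lemma norm_mul_sum_sq_sub_sq_sum_le {ι : Type*} [Fintype ι] {c : ℝ}
    (hc : (Fintype.card ι : ℝ) ≤ 2 * c) (z : ι → ℂ) :
    ‖(c : ℂ) * ∑ i, z i ^ 2 - (∑ i, z i) ^ 2‖ ≤ c * ∑ i, ‖z i‖ ^ 2 := by
  have hc0 : 0 ≤ c := by linarith [(Fintype.card ι).cast_nonneg (α := ℝ)]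
  rw [mul_sum_sq_sub_sq_sum]
  refine (norm_sum_le _ _).trans ?_
  simp_rw [norm_mul, ← Complex.real_smul]
  exact sum_mul_le_of_sum_sq_le _ hc0 (sum_norm_smul_sub_sum_sq_le hc z)

lemma sum_neg_one_pow_fin_of_even {R : Type*} [Ring R] {n : ℕ} (hn : Even n) :
    ∑ i : Fin n, (-1 : R) ^ (i : ℕ) = 0 := by
  rw [Fin.sum_univ_eq_sum_range (fun i => (-1 : R) ^ i), neg_one_geom_sum, if_pos hn]

theorem kvh_sup_norm_even_general {d : ℕ} (hde : Even d) (s : ℝ)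
    (hs : (d : ℝ) / 2 - 1 < s) :
    IsGreatest
      {x : ℝ | ∃ z : Fin d → ℂ, (∀ i, ‖z i‖ ≤ 1) ∧
        x = ‖(1 + (s : ℂ)) * ∑ m, (z m) ^ 2 - (∑ m, z m) ^ 2‖}
      ((1 + s) * d) := by
  have hc : ((Fintype.card (Fin d)) : ℝ) ≤ 2 * (1 + s) := by
    rw [Fintype.card_fin]; linarith
  have hs0 : 0 ≤ 1 + s := by linarith [d.cast_nonneg (α := ℝ)]
  refine ⟨⟨fun i => (-1) ^ (i : ℕ), fun i => by simp, ?_⟩, ?_⟩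
  · simp_rw [← pow_mul, mul_comm _ 2, pow_mul, neg_one_sq, one_pow, sum_const, card_univ,
      Fintype.card_fin, sum_neg_one_pow_fin_of_even hde, nsmul_eq_mul, mul_one]
    norm_cast
    simp [abs_of_nonneg hs0]
  · rintro x ⟨z, hz, rfl⟩
    have hz2 : ∑ i, ‖z i‖ ^ 2 ≤ d := by
      simpa using sum_le_card_nsmul univ (fun i => ‖z i‖ ^ 2) 1 fun i _ =>
        pow_le_one₀ (norm_nonneg _) (hz i)
    calc _ ≤ (1 + s) * ∑ i, ‖z i‖ ^ 2 := by exact_mod_cast norm_mul_sum_sq_sub_sq_sum_le hc z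
      _ ≤ (1 + s) * d := by gcongr

/-- For even `d ≥ 2` and `s > d/2 - 1`, the polynomial
`p(z) = (1+s) ∑ z_m² - (∑ z_m)²` satisfies `sup_{z ∈ closed 𝔻^d} |p(z)| = (1+s) d`,
and the supremum is attained. -/
theorem kvh_sup_norm_even {d : ℕ} (hd : 2 ≤ d) (hde : Even d) (s : ℝ)
    (hs : (d : ℝ) / 2 - 1 < s) :
    IsGreatest
      {x : ℝ | ∃ z : Fin d → ℂ, (∀ i, ‖z i‖ ≤ 1) ∧
        x = ‖(1 + (s : ℂ)) * ∑ m, (z m) ^ 2 - (∑ m, z m) ^ 2‖}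
      ((1 + s) * d) :=
  kvh_sup_norm_even_general hde s hs
end

section
/- Let $d \ge 3$ be odd and $s > d/2 - 1$. Define $p(z_1, \ldots, z_d) = (1+s)\sum_{m=1}^d z_m^2 - (\sum_{m=1}^d z_m)^2$. Then $\sup_{z \in \overline{\mathbb{D}}^d} |p(z)| < (1+s)d$. -/
/-!
With `b = ∑ zᵢ`, subtracting the mean `b / d` gives
`(1 + s) ∑ zᵢ² - b² = (1 + s) ∑ (zᵢ - b / d)² + ((1 + s - d) / d) b²`, and
`∑ |zᵢ - b / d|² = ∑ |zᵢ|² - |b|² / d ≤ d - |b|² / d`. Hence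
`|p(z)| ≤ (1 + s) d - (1 + s - |1 + s - d|) |b|² / d`, which is below `(1 + s) d` when `b ≠ 0`
because `s > d / 2 - 1`. When `b = 0`, `|∑ zᵢ²| = d` would force all `zᵢ²` to equal one nonzero
value, i.e. `zᵢ = ±a`, and an odd number of terms `±a` cannot sum to zero.
-/

open Finset

section

variable {ι : Type*} [Fintype ι]

theorem sum_sub_sum_div_card_sq {K : Type*} [Field K] (x : ι → K) :
    ∑ i, (x i - (∑ j, x j) / Fintype.card ι) ^ 2
      = ∑ i, x i ^ 2 - (∑ i, x i) ^ 2 / Fintype.card ι := by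
  set n : K := (Fintype.card ι : K)
  simp_rw [sub_sq, sum_add_distrib, sum_sub_distrib, ← sum_mul, ← mul_sum, sum_const,
    card_univ, nsmul_eq_mul]
  rcases eq_or_ne n 0 with hn | hn
  · simp [hn]
  · field_simp
    ring

theorem sum_norm_sub_smul_sum_sq {E : Type*} [NormedAddCommGroup E] [InnerProductSpace ℝ E]
    (v : ι → E) :
    ∑ i, ‖v i - (Fintype.card ι : ℝ)⁻¹ • ∑ j, v j‖ ^ 2
      = ∑ i, ‖v i‖ ^ 2 - ‖∑ i, v i‖ ^ 2 / Fintype.card ι := by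
  set n : ℝ := (Fintype.card ι : ℝ)
  simp_rw [norm_sub_sq_real, sum_add_distrib, sum_sub_distrib, ← mul_sum, ← sum_inner,
    sum_const, card_univ, nsmul_eq_mul, real_inner_smul_right, real_inner_self_eq_norm_sq,
    norm_smul, mul_pow, Real.norm_eq_abs, sq_abs]
  rcases eq_or_ne n 0 with hn | hn
  · simp [hn]
  · field_simp
    ring

theorem eq_inv_card_smul_sum_of_card_le_norm_sum {E : Type*} [NormedAddCommGroup E]
    [InnerProductSpace ℝ E] (v : ι → E) (hv : ∀ i, ‖v i‖ ≤ 1)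
    (hsum : (Fintype.card ι : ℝ) ≤ ‖∑ i, v i‖) (i : ι) :
    v i = (Fintype.card ι : ℝ)⁻¹ • ∑ j, v j := by
  set n : ℝ := (Fintype.card ι : ℝ)
  have hsq : ∑ i, ‖v i‖ ^ 2 ≤ n := by
    simpa [n] using sum_le_sum fun i (_ : i ∈ univ) ↦ pow_le_one₀ (norm_nonneg (v i)) (hv i)
  have hmax : n ≤ ‖∑ i, v i‖ ^ 2 / n := by
    calc n = n ^ 2 / n := by rw [sq, mul_self_div_self]
      _ ≤ ‖∑ i, v i‖ ^ 2 / n := by gcongr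
  have hzero : ∑ i, ‖v i - n⁻¹ • ∑ j, v j‖ ^ 2 = 0 :=
    le_antisymm (by rw [sum_norm_sub_smul_sum_sq]; linarith) (by positivity)
  rw [sum_eq_zero_iff_of_nonneg fun _ _ ↦ by positivity] at hzero
  simpa [sub_eq_zero] using hzero i (mem_univ i)

theorem even_card_of_sum_eq_zero_of_sq_eq {K : Type*} [Field K] [CharZero K] (x : ι → K)
    {a : K} (ha : a ≠ 0) (hsq : ∀ i, x i ^ 2 = a ^ 2) (hsum : ∑ i, x i = 0) :
    Even (Fintype.card ι) := by
  classical
  set P := univ.filter fun i ↦ x i = a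
  have hneg : ∀ i ∈ univ.filter (fun i ↦ ¬x i = a), x i = -a := fun i hi ↦
    ((sq_eq_sq_iff_eq_or_eq_neg.mp (hsq i)).resolve_left (mem_filter.mp hi).2)
  have hsplit : ∑ i, x i = ((#P : K) - #(univ.filter fun i ↦ ¬x i = a)) * a := by
    rw [← sum_filter_add_sum_filter_not univ (fun i ↦ x i = a),
      sum_congr rfl fun i hi ↦ (mem_filter.mp hi).2, sum_congr rfl hneg]
    simp only [sum_const, nsmul_eq_mul]
    ring
  rw [hsum, eq_comm, mul_eq_zero, sub_eq_zero, Nat.cast_inj] at hsplit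
  have hcard := card_filter_add_card_filter_not (s := univ) fun i ↦ x i = a
  exact ⟨#P, by rw [← card_univ, ← hcard, ← hsplit.resolve_right ha]⟩

theorem Complex.norm_sum_sq_lt_card_of_sum_eq_zero (z : ι → ℂ) (hodd : Odd (Fintype.card ι))
    (hz : ∀ i, ‖z i‖ ≤ 1) (hsum : ∑ i, z i = 0) :
    ‖∑ i, z i ^ 2‖ < Fintype.card ι := by
  by_contra! hmax
  have hconst := eq_inv_card_smul_sum_of_card_le_norm_sum (fun i ↦ z i ^ 2)
    (fun i ↦ by rw [norm_pow]; exact pow_le_one₀ (norm_nonneg _) (hz i)) hmax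
  obtain ⟨i₀⟩ : Nonempty ι := Fintype.card_pos_iff.mp hodd.pos
  have hz₀ : z i₀ ≠ 0 := by
    intro h
    have hS : ∑ i, z i ^ 2 = 0 := sum_eq_zero fun i _ ↦ by rw [hconst i, ← hconst i₀, h]; ring
    rw [hS, norm_zero] at hmax
    exact hodd.pos.ne' (by exact_mod_cast le_antisymm hmax (Nat.cast_nonneg _))
  refine Nat.not_even_iff_odd.mpr hodd
    (even_card_of_sum_eq_zero_of_sq_eq z hz₀ (fun i ↦ ?_) hsum)
  rw [hconst i, hconst i₀]

theorem Complex.norm_mul_sum_sq_sub_sq_sum_le [Nonempty ι] (z : ι → ℂ) (hz : ∀ i, ‖z i‖ ≤ 1)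
    {a : ℝ} (ha : 0 ≤ a) :
    ‖a * ∑ i, z i ^ 2 - (∑ i, z i) ^ 2‖
      ≤ a * (Fintype.card ι - ‖∑ i, z i‖ ^ 2 / Fintype.card ι)
        + |a - Fintype.card ι| * (‖∑ i, z i‖ ^ 2 / Fintype.card ι) := by
  set n := Fintype.card ι
  set b := ∑ i, z i
  have hn : (n : ℝ) ≠ 0 := by positivity
  have hmean : b / n = (n : ℝ)⁻¹ • b := by rw [Complex.real_smul, div_eq_inv_mul]; push_cast; rfl
  have hdecomp : a * ∑ i, z i ^ 2 - b ^ 2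
      = a * ∑ i, (z i - (n : ℝ)⁻¹ • b) ^ 2 + ((a - n) / n : ℝ) * b ^ 2 := by
    have hnC : (n : ℂ) ≠ 0 := by exact_mod_cast hn
    rw [← hmean, sum_sub_sum_div_card_sq]
    push_cast
    field_simp
    ring
  have hvar : ‖∑ i, (z i - (n : ℝ)⁻¹ • b) ^ 2‖ ≤ n - ‖b‖ ^ 2 / n := by
    calc ‖∑ i, (z i - (n : ℝ)⁻¹ • b) ^ 2‖ ≤ ∑ i, ‖z i - (n : ℝ)⁻¹ • b‖ ^ 2 :=
          (norm_sum_le _ _).trans_eq (by simp only [norm_pow])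
      _ = ∑ i, ‖z i‖ ^ 2 - ‖b‖ ^ 2 / n := sum_norm_sub_smul_sum_sq z
      _ ≤ n - ‖b‖ ^ 2 / n := by
          gcongr
          simpa [n] using sum_le_sum fun i (_ : i ∈ univ) ↦ pow_le_one₀ (norm_nonneg _) (hz i)
  rw [hdecomp]
  calc _ ≤ a * ‖∑ i, (z i - (n : ℝ)⁻¹ • b) ^ 2‖ + |a - n| * (‖b‖ ^ 2 / n) := by
        refine (norm_add_le _ _).trans_eq ?_
        rw [norm_mul, norm_mul, norm_pow, Complex.norm_real, Complex.norm_real, Real.norm_eq_abs,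
          Real.norm_eq_abs, abs_of_nonneg ha, abs_div, Nat.abs_cast]
        ring
    _ ≤ _ := by gcongr

end

theorem kvh_sup_norm_odd_general {d : ℕ} (hdo : Odd d) (s : ℝ)
    (hs : (d : ℝ) / 2 - 1 < s) :
    ∀ z : Fin d → ℂ, (∀ i, ‖z i‖ ≤ 1) →
      ‖(1 + (s : ℂ)) * ∑ m, (z m) ^ 2 - (∑ m, z m) ^ 2‖ < (1 + s) * d := by
  intro z hz
  have hd : (0 : ℝ) < d := by exact_mod_cast hdo.pos
  have hs₁ : 0 < 1 + s := by linarith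
  have hcoeff : (1 + (s : ℂ)) = ((1 + s : ℝ) : ℂ) := by push_cast; rfl
  rcases eq_or_ne (∑ m, z m) 0 with hsum | hsum
  · have hlt := Complex.norm_sum_sq_lt_card_of_sum_eq_zero z (by simpa using hdo) hz hsum
    rw [Fintype.card_fin] at hlt
    rw [hsum, zero_pow two_ne_zero, sub_zero, norm_mul, hcoeff, Complex.norm_real,
      Real.norm_of_nonneg hs₁.le]
    gcongr
  · have : Nonempty (Fin d) := ⟨⟨0, hdo.pos⟩⟩
    have hle := Complex.norm_mul_sum_sq_sub_sq_sum_le z hz hs₁.le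
    rw [Fintype.card_fin] at hle
    have ht : 0 < ‖∑ m, z m‖ ^ 2 / d := by positivity
    have hgap : |1 + s - d| < 1 + s := abs_sub_lt_iff.mpr ⟨by linarith, by linarith⟩
    rw [hcoeff]
    calc _ ≤ _ := hle
      _ < (1 + s) * (d - ‖∑ m, z m‖ ^ 2 / d) + (1 + s) * (‖∑ m, z m‖ ^ 2 / d) := by gcongr
      _ = (1 + s) * d := by ring

/-- For odd `d ≥ 3` and `s > d/2 - 1`, the polynomial
`p(z) = (1+s) ∑ z_m² - (∑ z_m)²` satisfies `|p(z)| < (1+s) d` on the closed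
unit polydisk (hence its sup norm is strictly less than `(1+s) d`). -/
theorem kvh_sup_norm_odd {d : ℕ} (hd : 3 ≤ d) (hdo : Odd d) (s : ℝ)
    (hs : (d : ℝ) / 2 - 1 < s) :
    ∀ z : Fin d → ℂ, (∀ i, ‖z i‖ ≤ 1) →
      ‖(1 + (s : ℂ)) * ∑ m, (z m) ^ 2 - (∑ m, z m) ^ 2‖ < (1 + s) * d :=
  kvh_sup_norm_odd_general hdo s hs
end

section
/- Let $d \ge 2$, let $v_1, \ldots, v_d$ be unit vectors in $\mathbb{R}^2$ with $\sum_{i=1}^d v_i = 0$, and define $T_i = \begin{bmatrix} 0 & v_i^\top & 0 \\ 0 & 0 & v_i \\ 0 & 0 & 0 \end{bmatrix} \in \mathbb{R}^{4 \times 4}$. Then the $T_i$ are pairwise commuting contractions with $T_i T_j = \langle v_i, v_j \rangle\, e_1 e_4^\top$ for all $i,j$, $\sum_{i=1}^d T_i = 0$, and for $p(z) = (1+s)\sum_m z_m^2 - (\sum_m z_m)^2$ one has $p(T_1, \ldots, T_d) e_4 = (1+s) d\, e_1$. -/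
/-! Each product `Tᵢ Tⱼ` lives in the corner entry `(1,4)` with coefficient `⟨vᵢ, vⱼ⟩`, so the `Tᵢ`
commute and, the `vᵢ` being unit vectors, `Tₘ² = e₁e₄ᵀ`. As `v ↦ T` is linear, `∑ Tᵢ = 0`, hence
`p(T) = (1+s) d e₁e₄ᵀ`. Contractivity is Cauchy–Schwarz:
`‖Tᵢ x‖² = ⟨vᵢ, (x₂, x₃)⟩² + x₄² ≤ ‖x‖²`. -/

open scoped Matrix.Norms.L2Operator
open Matrix

theorem Matrix.l2_opNorm_le_of_sum_sq_mulVec_le {m n : Type*} [Fintype m] [Fintype n]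
    [DecidableEq n] (A : Matrix m n ℝ) {c : ℝ} (hc : 0 ≤ c)
    (h : ∀ x : n → ℝ, ∑ i, (A *ᵥ x) i ^ 2 ≤ c ^ 2 * ∑ j, x j ^ 2) : ‖A‖ ≤ c := by
  rw [l2_opNorm_def]
  refine ContinuousLinearMap.opNorm_le_bound _ hc fun x => ?_
  rw [EuclideanSpace.norm_eq, EuclideanSpace.norm_eq, ← Real.sqrt_sq hc,
    ← Real.sqrt_mul (sq_nonneg c)]
  apply Real.sqrt_le_sqrt
  simpa [sq_abs] using h x

def kvhMatrix (u : Fin 2 → ℝ) : Matrix (Fin 4) (Fin 4) ℝ :=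
  !![0, u 0, u 1, 0;
     0, 0,   0,   u 0;
     0, 0,   0,   u 1;
     0, 0,   0,   0]

theorem kvhMatrix_mul_kvhMatrix (u w : Fin 2 → ℝ) :
    kvhMatrix u * kvhMatrix w = (u 0 * w 0 + u 1 * w 1) • single 0 3 1 := by
  ext a b
  fin_cases a <;> fin_cases b <;> simp [kvhMatrix, mul_apply, Fin.sum_univ_four]

theorem kvhMatrix_commute (u w : Fin 2 → ℝ) : Commute (kvhMatrix u) (kvhMatrix w) := by
  rw [Commute, SemiconjBy, kvhMatrix_mul_kvhMatrix, kvhMatrix_mul_kvhMatrix, mul_comm (u 0),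
    mul_comm (u 1)]

theorem kvhMatrix_sum {ι : Type*} (s : Finset ι) (v : ι → Fin 2 → ℝ) :
    ∑ i ∈ s, kvhMatrix (v i) = kvhMatrix (∑ i ∈ s, v i) := by
  ext a b
  fin_cases a <;> fin_cases b <;> simp [kvhMatrix, Matrix.sum_apply]

theorem kvhMatrix_zero : kvhMatrix 0 = 0 := by
  ext a b
  fin_cases a <;> fin_cases b <;> simp [kvhMatrix]

theorem norm_kvhMatrix_le (u : Fin 2 → ℝ) : ‖kvhMatrix u‖ ≤ √(u 0 ^ 2 + u 1 ^ 2) := by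
  refine l2_opNorm_le_of_sum_sq_mulVec_le _ (Real.sqrt_nonneg _) fun x => ?_
  rw [Real.sq_sqrt (by positivity)]
  simp only [kvhMatrix, mulVec, dotProduct, Fin.sum_univ_four, of_apply, cons_val', cons_val_zero,
    cons_val_one, cons_val, cons_val_fin_one, zero_mul, zero_add, add_zero, ne_eq,
    OfNat.ofNat_ne_zero, not_false_eq_true, zero_pow]
  nlinarith [sq_nonneg (u 0 * x 2 - u 1 * x 1), sq_nonneg (x 0), sq_nonneg (u 0 * x 0),
    sq_nonneg (u 1 * x 0)]

theorem single_mulVec_pi_single {n : Type*} [Fintype n] [DecidableEq n] (i j : n) :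
    single i j (1 : ℝ) *ᵥ Pi.single j 1 = Pi.single i 1 := by
  rw [single_mulVec]
  simp [Pi.single]

theorem kvhMatrix_sq {u : Fin 2 → ℝ} (hu : u 0 ^ 2 + u 1 ^ 2 = 1) :
    kvhMatrix u ^ 2 = single 0 3 1 := by
  rw [sq, kvhMatrix_mul_kvhMatrix, ← sq, ← sq, hu, one_smul]

theorem kvh_tuple_properties_general {d : ℕ} (s : ℝ)
    (v : Fin d → Fin 2 → ℝ)
    (hunit : ∀ i, v i 0 ^ 2 + v i 1 ^ 2 = 1)
    (hsum : ∀ c, ∑ i, v i c = 0)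
    (T : Fin d → Matrix (Fin 4) (Fin 4) ℝ)
    (hT : ∀ i, T i = !![0, v i 0, v i 1, 0;
                       0, 0,     0,     v i 0;
                       0, 0,     0,     v i 1;
                       0, 0,     0,     0]) :
    (∀ i j, T i * T j = T j * T i) ∧
    (∀ i, ‖T i‖ ≤ 1) ∧
    (∀ i j, T i * T j =
      (v i 0 * v j 0 + v i 1 * v j 1) • Matrix.single (0 : Fin 4) (3 : Fin 4) (1 : ℝ)) ∧
    (∑ i, T i = 0) ∧
    ((((1 + s) • ∑ m, (T m) ^ 2 - (∑ m, T m) ^ 2).mulVec (Pi.single (3 : Fin 4) 1)) =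
      ((1 + s) * d) • (Pi.single (0 : Fin 4) 1 : Fin 4 → ℝ)) := by
  obtain rfl : T = fun i => kvhMatrix (v i) := funext hT
  have hT_sum : ∑ i, kvhMatrix (v i) = 0 := by
    rw [kvhMatrix_sum, show ∑ i, v i = 0 from funext fun c => by simpa using hsum c,
      kvhMatrix_zero]
  refine ⟨fun i j => kvhMatrix_commute _ _, fun i => ?_, fun i j => kvhMatrix_mul_kvhMatrix _ _,
    hT_sum, ?_⟩
  · simpa [hunit i] using norm_kvhMatrix_le (v i)
  · simp only [kvhMatrix_sq (hunit _), hT_sum, Finset.sum_const, Finset.card_univ,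
      Fintype.card_fin, zero_pow two_ne_zero, sub_zero, smul_mulVec, single_mulVec_pi_single]
    rw [← Nat.cast_smul_eq_nsmul ℝ, mul_smul]

/-- For unit vectors `v₁,…,v_d ∈ ℝ²` with zero sum, the matrices
`Tᵢ = [0 vᵢᵀ 0; 0 0 vᵢ; 0 0 0] ∈ ℝ^{4×4}` are pairwise commuting contractions
with `Tᵢ Tⱼ = ⟨vᵢ, vⱼ⟩ e₁ e₄ᵀ`, `∑ Tᵢ = 0`, and
`p(T₁,…,T_d) e₄ = (1+s) d e₁` for `p(z) = (1+s) ∑ z_m² - (∑ z_m)²`. -/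
theorem kvh_tuple_properties {d : ℕ} (hd : 2 ≤ d) (s : ℝ)
    (v : Fin d → Fin 2 → ℝ)
    (hunit : ∀ i, v i 0 ^ 2 + v i 1 ^ 2 = 1)
    (hsum : ∀ c, ∑ i, v i c = 0)
    (T : Fin d → Matrix (Fin 4) (Fin 4) ℝ)
    (hT : ∀ i, T i = !![0, v i 0, v i 1, 0;
                       0, 0,     0,     v i 0;
                       0, 0,     0,     v i 1;
                       0, 0,     0,     0]) :
    (∀ i j, T i * T j = T j * T i) ∧
    (∀ i, ‖T i‖ ≤ 1) ∧
    (∀ i j, T i * T j =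
      (v i 0 * v j 0 + v i 1 * v j 1) • Matrix.single (0 : Fin 4) (3 : Fin 4) (1 : ℝ)) ∧
    (∑ i, T i = 0) ∧
    ((((1 + s) • ∑ m, (T m) ^ 2 - (∑ m, T m) ^ 2).mulVec (Pi.single (3 : Fin 4) 1)) =
      ((1 + s) * d) • (Pi.single (0 : Fin 4) 1 : Fin 4 → ℝ)) :=
  kvh_tuple_properties_general s v hunit hsum T hT
end

section
/- Let $a \in \mathbb{C}$ with $\sqrt{2} - 1 < |a| \le 1$, and $p(z) = (1 - az)^2$ a one-variable polynomial. Then $p(z) = \det(I_2 - aI_2 \cdot zI_2)$ with $\|a I_2\| = |a| \le 1$, yet $\sup_{|z| \le 1} |1 - p(z)| = 2|a| + |a|^2 > 1$. -/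
open scoped Matrix.Norms.L2Operator

/-!
The representation is immediate, since `a I₂ * z I₂ = (a z) I₂`. For the supremum, write
`w = a z`: then `1 - p(z) = 2w - w²`, whose modulus is at most `2|w| + |w|²`, with equality at
`w = -|a|`, which is reached at `z = -ā / |a|`. Finally `2t + t² > 1` is `(t + 1)² > 2`.
-/

open ComplexConjugate

theorem Matrix.det_one_sub_smul_one_mul_smul_one {n R : Type*} [Fintype n] [DecidableEq n]
    [CommRing R] (a z : R) :
    (1 - a • (1 : Matrix n n R) * z • (1 : Matrix n n R)).det = (1 - a * z) ^ Fintype.card n := by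
  have : 1 - a • (1 : Matrix n n R) * z • 1 = (1 - a * z) • 1 := by
    rw [smul_mul_smul_comm, one_mul, sub_smul, one_smul]
  rw [this, Matrix.det_smul, Matrix.det_one, mul_one]

theorem Matrix.l2_opNorm_smul_one {n 𝕜 : Type*} [Fintype n] [DecidableEq n] [Nonempty n]
    [RCLike 𝕜] (a : 𝕜) : ‖a • (1 : Matrix n n 𝕜)‖ = ‖a‖ := by
  rw [norm_smul, norm_one, mul_one]

theorem norm_two_mul_sub_sq_le {𝕜 : Type*} [NormedRing 𝕜] [NormOneClass 𝕜] (w : 𝕜) :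
    ‖2 * w - w ^ 2‖ ≤ 2 * ‖w‖ + ‖w‖ ^ 2 :=
  calc ‖2 * w - w ^ 2‖ ≤ ‖2 * w‖ + ‖w ^ 2‖ := norm_sub_le _ _
    _ ≤ 2 * ‖w‖ + ‖w‖ ^ 2 := by
      gcongr
      · rw [two_mul, two_mul]; exact norm_add_le _ _
      · exact norm_pow_le _ _

theorem Complex.mul_neg_conj_div_norm (a : ℂ) : a * (-conj a / ‖a‖) = -‖a‖ := by
  rcases eq_or_ne a 0 with rfl | ha
  · simp
  have : (‖a‖ : ℂ) ≠ 0 := by exact_mod_cast norm_ne_zero_iff.mpr ha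
  rw [mul_div_assoc', mul_neg, Complex.mul_conj', neg_div, pow_two, mul_div_cancel_right₀ _ this]

theorem Complex.isGreatest_norm_one_sub_one_sub_mul_sq (a : ℂ) :
    IsGreatest {x : ℝ | ∃ z : ℂ, ‖z‖ ≤ 1 ∧ x = ‖1 - (1 - a * z) ^ 2‖} (2 * ‖a‖ + ‖a‖ ^ 2) := by
  have key (w : ℂ) : 1 - (1 - w) ^ 2 = 2 * w - w ^ 2 := by ring
  refine ⟨⟨-conj a / ‖a‖, ?_, ?_⟩, ?_⟩
  · rw [norm_div, norm_neg, Complex.norm_conj, Complex.norm_real, norm_norm]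
    exact div_self_le_one _
  · rw [key, Complex.mul_neg_conj_div_norm]
    have : 2 * -(‖a‖ : ℂ) - (-(‖a‖ : ℂ)) ^ 2 = -((2 * ‖a‖ + ‖a‖ ^ 2 : ℝ) : ℂ) := by
      push_cast; ring
    rw [this, norm_neg, Complex.norm_of_nonneg (by positivity)]
  · rintro x ⟨z, hz, rfl⟩
    have haz : ‖a * z‖ ≤ ‖a‖ := by
      rw [norm_mul]; exact mul_le_of_le_one_right (norm_nonneg a) hz
    calc ‖1 - (1 - a * z) ^ 2‖ = ‖2 * (a * z) - (a * z) ^ 2‖ := by rw [key]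
      _ ≤ 2 * ‖a * z‖ + ‖a * z‖ ^ 2 := norm_two_mul_sub_sq_le _
      _ ≤ 2 * ‖a‖ + ‖a‖ ^ 2 := by gcongr

theorem one_lt_two_mul_add_sq_of_sqrt_two_sub_one_lt {t : ℝ} (ht : √2 - 1 < t) :
    1 < 2 * t + t ^ 2 := by
  have : √2 < t + 1 := by linarith
  nlinarith [Real.sq_sqrt (zero_le_two : (0 : ℝ) ≤ 2), Real.sqrt_nonneg 2]

theorem contractive_rep_does_not_imply_schur_agler_general (a : ℂ)
    (h1 : Real.sqrt 2 - 1 < ‖a‖) :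
    (∀ z : ℂ, (1 - a * z) ^ 2 =
        (1 - a • (1 : Matrix (Fin 2) (Fin 2) ℂ) * z • (1 : Matrix (Fin 2) (Fin 2) ℂ)).det) ∧
      ‖a • (1 : Matrix (Fin 2) (Fin 2) ℂ)‖ = ‖a‖ ∧
      IsGreatest
        {x : ℝ | ∃ z : ℂ, ‖z‖ ≤ 1 ∧ x = ‖1 - (1 - a * z) ^ 2‖}
        (2 * ‖a‖ + ‖a‖ ^ 2) ∧
      1 < 2 * ‖a‖ + ‖a‖ ^ 2 :=
  ⟨fun z => by rw [Matrix.det_one_sub_smul_one_mul_smul_one, Fintype.card_fin],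
    Matrix.l2_opNorm_smul_one a, Complex.isGreatest_norm_one_sub_one_sub_mul_sq a,
    one_lt_two_mul_add_sq_of_sqrt_two_sub_one_lt h1⟩

/-- For `√2 - 1 < |a| ≤ 1`, the polynomial `p(z) = (1 - a z)²` admits the
determinantal representation `p(z) = det (I₂ - (a I₂)(z I₂))` with
`‖a I₂‖ = |a| ≤ 1`, and yet `sup_{|z| ≤ 1} |1 - p(z)| = 2|a| + |a|² > 1`. -/
theorem contractive_rep_does_not_imply_schur_agler (a : ℂ)
    (h1 : Real.sqrt 2 - 1 < ‖a‖) (h2 : ‖a‖ ≤ 1) :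
    (∀ z : ℂ, (1 - a * z) ^ 2 =
        (1 - a • (1 : Matrix (Fin 2) (Fin 2) ℂ) * z • (1 : Matrix (Fin 2) (Fin 2) ℂ)).det) ∧
      ‖a • (1 : Matrix (Fin 2) (Fin 2) ℂ)‖ = ‖a‖ ∧
      IsGreatest
        {x : ℝ | ∃ z : ℂ, ‖z‖ ≤ 1 ∧ x = ‖1 - (1 - a * z) ^ 2‖}
        (2 * ‖a‖ + ‖a‖ ^ 2) ∧
      1 < 2 * ‖a‖ + ‖a‖ ^ 2 :=
  contractive_rep_does_not_imply_schur_agler_general a h1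
end

section
/- Let $p(z) = 1 + \sum_{k \in S} p_k z^k$ be a $d$-variable polynomial with $S \subseteq \mathbb{N}_0^d \setminus \{0\}$ finite and all $p_k \neq 0$, let $t = \mathrm{tdeg}\, p$ and $\beta = (\sum_{k \in S} |p_k|)^{1/(t+1)}$. If $\beta \le 1$, then $p$ admits a determinantal representation $p(z) = \det(I_{|n|} - K Z_n)$ with $n = \sum_{k \in S} k$ and $\|K\| \le \beta$. -/
/-!
Give each monomial `z^k` a chain of `|k|` positions, labelled by a word in the variables that
contains `z_i` exactly `k_i` times, so that `Zₙ` reads the word along the chain. On the chains put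
`K = a bᵀ + β N`, where `N` shifts each chain by one position, `b` is supported on the chain
starts (value `γ_k`) and `a` on the chain ends (value `α_k`). Then `1 - β N Zₙ` is unipotent and
`1 - K Zₙ` is a rank-one perturbation of it, whence `det (1 - K Zₙ) = 1 - ∑ α_k γ_k β^(|k|-1) z^k`.
Since `a` and `N u` have disjoint supports and `N` is isometric off the chain starts,
`‖K u‖² ≤ ‖α‖² ‖γ‖² ‖u_start‖² + β² ‖u_rest‖²`, so `‖K‖ ≤ β` as soon as `‖α‖ ‖γ‖ ≤ β`.
Taking `α_k = γ_k` a square root of `-p_k / β^(|k|-1)` gives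
`‖α‖² = ∑ |p_k| / β^(|k|-1) ≤ ∑ |p_k| / β^t = β`, using `β ≤ 1` and `β^(t+1) = ∑ |p_k|`.
-/

open scoped Matrix.Norms.L2Operator

namespace Matrix

section Det

variable {m R : Type*} [Fintype m] [DecidableEq m] [CommRing R]

theorem det_one_sub_eq_one_of_lt {α : Type*} [LinearOrder α] {M : Matrix m m R} (b : m → α)
    (hM : ∀ i j, M i j ≠ 0 → b i < b j) : (1 - M).det = 1 := by
  have hM' : ∀ i j, b j ≤ b i → M i j = 0 := fun i j h =>
    not_not.mp fun hne => (hM i j hne).not_ge h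
  have htri : (1 - M).BlockTriangular b := fun i j hji => by
    rw [sub_apply, one_apply_ne fun h => (h ▸ hji).false, hM' i j hji.le, sub_zero]
  rw [htri.det]
  refine Finset.prod_eq_one fun a _ => ?_
  have : (1 - M).toSquareBlock b a = 1 := by
    ext ⟨i, hi⟩ ⟨j, hj⟩
    rw [toSquareBlock_def, of_apply, sub_apply, hM' i j (hj.trans hi.symm).le, sub_zero]
    simp [one_apply]
  rw [this, det_one]

theorem det_sub_vecMulVec_of_mulVec_eq {A : Matrix m m R} {a y : m → R} (hy : A *ᵥ y = a)
    (w : m → R) : (A - vecMulVec a w).det = A.det * (1 - w ⬝ᵥ y) := by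
  have hfac : A - vecMulVec a w = A * (1 + vecMulVec (-y) w) := by
    rw [mul_add, mul_one, mul_vecMulVec, mulVec_neg, hy, neg_vecMulVec, sub_eq_add_neg]
  rw [hfac, det_mul, vecMulVec_eq Unit, det_one_add_replicateCol_mul_replicateRow,
    dotProduct_neg, sub_eq_add_neg]

theorem det_one_sub_reindex_mul_diagonal {l : Type*} [Fintype l] [DecidableEq l] (e : l ≃ m)
    (A : Matrix l l R) (δ : m → R) :
    (1 - reindex e e A * diagonal δ).det = (1 - A * diagonal (δ ∘ e)).det := by
  rw [← det_reindex_self e (1 - A * diagonal (δ ∘ e))]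
  congr 1
  ext i j
  simp [mul_diagonal, sub_apply, one_apply]

end Det

section L2

variable {m n 𝕜 : Type*} [Fintype m] [Fintype n] [DecidableEq n] [RCLike 𝕜]

theorem sum_norm_sq_mulVec_le (A : Matrix m n 𝕜) (u : n → 𝕜) :
    ∑ i, ‖(A *ᵥ u) i‖ ^ 2 ≤ ‖A‖ ^ 2 * ∑ j, ‖u j‖ ^ 2 := by
  have h := pow_le_pow_left₀ (norm_nonneg _) (l2_opNorm_mulVec A (WithLp.toLp 2 u)) 2
  rwa [mul_pow, EuclideanSpace.norm_eq, EuclideanSpace.norm_eq,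
    Real.sq_sqrt (by positivity), Real.sq_sqrt (by positivity)] at h

theorem l2_opNorm_le_of_sum_norm_sq_le {A : Matrix m n 𝕜} {C : ℝ} (hC : 0 ≤ C)
    (h : ∀ u : n → 𝕜, ∑ i, ‖(A *ᵥ u) i‖ ^ 2 ≤ C ^ 2 * ∑ j, ‖u j‖ ^ 2) : ‖A‖ ≤ C := by
  rw [l2_opNorm_def]
  refine ContinuousLinearMap.opNorm_le_bound _ hC fun x => ?_
  rw [EuclideanSpace.norm_eq, EuclideanSpace.norm_eq, ← Real.sqrt_sq hC,
    ← Real.sqrt_mul (sq_nonneg C)]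
  exact Real.sqrt_le_sqrt (h x.ofLp)

theorem l2_opNorm_reindex_le {m' n' : Type*} [Fintype m'] [Fintype n'] [DecidableEq n']
    (e : m ≃ m') (f : n ≃ n') (A : Matrix m n 𝕜) : ‖reindex e f A‖ ≤ ‖A‖ :=
  l2_opNorm_le_of_sum_norm_sq_le (norm_nonneg A) fun u => by
    rw [reindex_apply, submatrix_mulVec_equiv, Equiv.symm_symm,
      ← f.sum_comp (fun j => ‖u j‖ ^ 2)]
    exact (e.symm.sum_comp fun i => ‖(A *ᵥ (u ∘ f)) i‖ ^ 2).trans_le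
      (sum_norm_sq_mulVec_le A _)

theorem l2_opNorm_reindex {m' n' : Type*} [Fintype m'] [Fintype n'] [DecidableEq n']
    (e : m ≃ m') (f : n ≃ n') (A : Matrix m n 𝕜) : ‖reindex e f A‖ = ‖A‖ :=
  (l2_opNorm_reindex_le e f A).antisymm <| by
    simpa using l2_opNorm_reindex_le e.symm f.symm (reindex e f A)

end L2

variable {ι R : Type*} (n : ι → ℕ)

-- Chain `i` has `n i + 1` positions, so every chain has a first and a last position.
abbrev ChainIndex : Type _ := Σ i, Fin (n i + 1)

def chainShift [DecidableEq ι] [Zero R] [One R] : Matrix (ChainIndex n) (ChainIndex n) R :=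
  of fun x y => if x.1 = y.1 ∧ (y.2 : ℕ) = x.2 + 1 then 1 else 0

def chainFirst [Zero R] (γ : ι → R) (x : ChainIndex n) : R := if x.2 = 0 then γ x.1 else 0

def chainLast [Zero R] (α : ι → R) (x : ChainIndex n) : R :=
  if x.2 = Fin.last _ then α x.1 else 0

def chainMatrix [DecidableEq ι] [Semiring R] (α γ : ι → R) (β : R) :
    Matrix (ChainIndex n) (ChainIndex n) R :=
  vecMulVec (chainLast n α) (chainFirst n γ) + β • chainShift n

section Shift

variable {n} [DecidableEq ι]

theorem lt_of_chainShift_apply_ne_zero [Zero R] [One R] {x y : ChainIndex n}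
    (h : (chainShift n : Matrix _ _ R) x y ≠ 0) : (x.2 : ℕ) < y.2 := by
  by_contra hxy
  exact h (if_neg fun hc => hxy (by omega))

variable [Fintype ι] [NonAssocSemiring R]

theorem chainShift_mulVec_castSucc (g : ChainIndex n → R) (i : ι) (j : Fin (n i)) :
    (chainShift n *ᵥ g) ⟨i, j.castSucc⟩ = g ⟨i, j.succ⟩ := by
  rw [mulVec, dotProduct, Fintype.sum_eq_single ⟨i, j.succ⟩]
  · simp [chainShift]
  · rintro ⟨i', j'⟩ hne
    rw [chainShift, of_apply, if_neg, zero_mul]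
    rintro ⟨rfl, h⟩
    exact hne (congrArg _ (Fin.ext (by simpa using h)))

theorem chainShift_mulVec_last (g : ChainIndex n → R) (i : ι) :
    (chainShift n *ᵥ g) ⟨i, Fin.last _⟩ = 0 :=
  Finset.sum_eq_zero fun y _ => by
    simp only [chainShift, of_apply]
    rw [if_neg, zero_mul]
    rintro ⟨rfl, h⟩
    have := y.2.isLt
    simp only [Fin.val_last] at h
    omega

end Shift

section Det

variable {n} [Fintype ι] [CommRing R]

theorem chainFirst_dotProduct (γ : ι → R) (u : ChainIndex n → R) :
    chainFirst n γ ⬝ᵥ u = ∑ i, γ i * u ⟨i, 0⟩ := by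
  rw [dotProduct, Fintype.sum_sigma]
  refine Fintype.sum_congr _ _ fun i => ?_
  rw [Fintype.sum_eq_single 0 fun j hj => by rw [chainFirst, if_neg hj, zero_mul], chainFirst,
    if_pos rfl]

def chainTailProd (α : ι → R) (β : R) (δ : ChainIndex n → R) (x : ChainIndex n) : R :=
  α x.1 * ∏ l ∈ Finset.Ioi x.2, β * δ ⟨x.1, l⟩

variable [DecidableEq ι] (α γ : ι → R) (β : R) (δ : ChainIndex n → R)

theorem chainMatrix_mulVec (u : ChainIndex n → R) (x : ChainIndex n) :
    (chainMatrix n α γ β *ᵥ u) x =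
      chainLast n α x * (chainFirst n γ ⬝ᵥ u) + β * (chainShift n *ᵥ u) x := by
  rw [chainMatrix, add_mulVec, vecMulVec_mulVec, smul_mulVec]
  simp [mul_comm]

theorem one_sub_smul_chainShift_mul_diagonal_mulVec_chainTailProd :
    (1 - β • chainShift n * diagonal δ) *ᵥ chainTailProd α β δ = chainLast n α := by
  funext ⟨i, j⟩
  rw [sub_mulVec, one_mulVec, ← mulVec_mulVec, smul_mulVec, Pi.sub_apply, Pi.smul_apply]
  induction j using Fin.lastCases with
  | last =>
    rw [chainShift_mulVec_last, chainTailProd, chainLast, if_pos rfl,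
      Finset.Ioi_eq_empty.2 fun b _ => Fin.le_last b]
    simp
  | cast j =>
    rw [chainShift_mulVec_castSucc, mulVec_diagonal, chainTailProd, chainTailProd, chainLast,
      if_neg (Fin.castSucc_lt_last j).ne]
    have : Finset.Ioi j.castSucc = Finset.Ici j.succ := by
      ext l
      simp [Fin.lt_def, Fin.le_def]
    rw [this, ← Finset.mul_prod_Ioi_eq_prod_Ici, smul_eq_mul]
    ring

theorem det_one_sub_smul_chainShift_mul_diagonal :
    (1 - β • chainShift n * diagonal δ).det = 1 :=
  det_one_sub_eq_one_of_lt (fun x : ChainIndex n => (x.2 : ℕ)) fun x y h => by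
    rw [mul_diagonal, smul_apply] at h
    exact lt_of_chainShift_apply_ne_zero (right_ne_zero_of_smul (left_ne_zero_of_mul h))

theorem det_one_sub_chainMatrix_mul_diagonal :
    (1 - chainMatrix n α γ β * diagonal δ).det =
      1 - ∑ i, α i * γ i * β ^ n i * ∏ j, δ ⟨i, j⟩ := by
  have hsplit : 1 - chainMatrix n α γ β * diagonal δ = (1 - β • chainShift n * diagonal δ) -
      vecMulVec (chainLast n α) (chainFirst n γ ᵥ* diagonal δ) := by
    rw [chainMatrix, add_mul, vecMulVec_mul]
    abel
  rw [hsplit, det_sub_vecMulVec_of_mulVec_eq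
    (one_sub_smul_chainShift_mul_diagonal_mulVec_chainTailProd α β δ),
    det_one_sub_smul_chainShift_mul_diagonal, one_mul]
  congr 1
  rw [dotProduct, Fintype.sum_sigma]
  refine Fintype.sum_congr _ _ fun i => ?_
  rw [Fintype.sum_eq_single 0 fun j hj => by simp [vecMul_diagonal, chainFirst, hj]]
  rw [vecMul_diagonal, chainFirst, if_pos rfl, chainTailProd, Fin.prod_Ioi_zero,
    Finset.prod_mul_distrib, Finset.prod_const, Finset.card_univ, Fintype.card_fin,
    Fin.prod_univ_succ]
  ring

end Det

section Norm

variable {n} [Fintype ι] {𝕜 : Type*} [RCLike 𝕜]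

theorem sum_norm_chainLast_sq (α : ι → 𝕜) : ∑ x, ‖chainLast n α x‖ ^ 2 = ∑ i, ‖α i‖ ^ 2 := by
  rw [Fintype.sum_sigma]
  refine Fintype.sum_congr _ _ fun i => ?_
  rw [Fintype.sum_eq_single (Fin.last _) fun j hj => by simp [chainLast, hj], chainLast,
    if_pos rfl]

theorem norm_chainFirst_dotProduct_sq_le (γ : ι → 𝕜) (u : ChainIndex n → 𝕜) :
    ‖chainFirst n γ ⬝ᵥ u‖ ^ 2 ≤ (∑ i, ‖γ i‖ ^ 2) * ∑ i, ‖u ⟨i, 0⟩‖ ^ 2 := by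
  rw [chainFirst_dotProduct]
  calc ‖∑ i, γ i * u ⟨i, 0⟩‖ ^ 2 ≤ (∑ i, ‖γ i‖ * ‖u ⟨i, 0⟩‖) ^ 2 := by
        gcongr
        exact (norm_sum_le _ _).trans_eq (by simp only [norm_mul])
    _ ≤ _ := Finset.sum_mul_sq_le_sq_mul_sq _ _ _

variable [DecidableEq ι]

theorem norm_chainMatrix_mulVec_sq (α γ : ι → 𝕜) (β : 𝕜) (u : ChainIndex n → 𝕜)
    (x : ChainIndex n) :
    ‖(chainMatrix n α γ β *ᵥ u) x‖ ^ 2 =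
      ‖chainLast n α x‖ ^ 2 * ‖chainFirst n γ ⬝ᵥ u‖ ^ 2 +
        ‖β‖ ^ 2 * ‖(chainShift n *ᵥ u) x‖ ^ 2 := by
  obtain ⟨i, j⟩ := x
  rw [chainMatrix_mulVec]
  induction j using Fin.lastCases with
  | last => simp [chainShift_mulVec_last, norm_mul, mul_pow]
  | cast j => simp [chainLast, (Fin.castSucc_lt_last j).ne, norm_mul, mul_pow]

theorem sum_norm_chainShift_mulVec_sq (u : ChainIndex n → 𝕜) :
    ∑ x, ‖(chainShift n *ᵥ u) x‖ ^ 2 + ∑ i, ‖u ⟨i, 0⟩‖ ^ 2 = ∑ x, ‖u x‖ ^ 2 := by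
  simp only [Fintype.sum_sigma, ← Finset.sum_add_distrib]
  refine Fintype.sum_congr _ _ fun i => ?_
  rw [Fin.sum_univ_castSucc, chainShift_mulVec_last, Fin.sum_univ_succ]
  simp only [chainShift_mulVec_castSucc, norm_zero]
  ring

theorem l2_opNorm_chainMatrix_le (α γ : ι → 𝕜) (β : 𝕜)
    (h : (∑ i, ‖α i‖ ^ 2) * ∑ i, ‖γ i‖ ^ 2 ≤ ‖β‖ ^ 2) : ‖chainMatrix n α γ β‖ ≤ ‖β‖ :=
  l2_opNorm_le_of_sum_norm_sq_le (norm_nonneg β) fun u => by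
    calc ∑ x, ‖(chainMatrix n α γ β *ᵥ u) x‖ ^ 2
        = (∑ i, ‖α i‖ ^ 2) * ‖chainFirst n γ ⬝ᵥ u‖ ^ 2 +
            ‖β‖ ^ 2 * ∑ x, ‖(chainShift n *ᵥ u) x‖ ^ 2 := by
          simp only [norm_chainMatrix_mulVec_sq, Finset.sum_add_distrib, ← Finset.sum_mul,
            sum_norm_chainLast_sq, ← Finset.mul_sum]
      _ ≤ (∑ i, ‖α i‖ ^ 2) * ((∑ i, ‖γ i‖ ^ 2) * ∑ i, ‖u ⟨i, 0⟩‖ ^ 2) +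
            ‖β‖ ^ 2 * ∑ x, ‖(chainShift n *ᵥ u) x‖ ^ 2 := by
          gcongr
          exact norm_chainFirst_dotProduct_sq_le γ u
      _ ≤ ‖β‖ ^ 2 * ∑ i, ‖u ⟨i, 0⟩‖ ^ 2 + ‖β‖ ^ 2 * ∑ x, ‖(chainShift n *ᵥ u) x‖ ^ 2 := by
          rw [← mul_assoc]
          gcongr
      _ = ‖β‖ ^ 2 * ∑ x, ‖u x‖ ^ 2 := by
          rw [← mul_add, add_comm, sum_norm_chainShift_mulVec_sq]

end Norm

end Matrix

def Equiv.sigmaComm {α β : Type*} (γ : α → β → Type*) : (Σ a b, γ a b) ≃ Σ b a, γ a b where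
  toFun x := ⟨x.2.1, x.1, x.2.2⟩
  invFun y := ⟨y.2.1, y.1, y.2.2⟩
  left_inv _ := rfl
  right_inv _ := rfl

theorem prod_equiv_fst_eq_prod_pow {M : Type*} [CommMonoid M] {d N : ℕ} {k : Fin d → ℕ}
    (e : Fin N ≃ Σ i, Fin (k i)) (z : Fin d → M) : ∏ j, z (e j).1 = ∏ i, z i ^ k i := by
  rw [e.prod_comp fun p => z p.1, Fintype.prod_sigma]
  simp

theorem sum_div_pow_le_of_sum_eq_pow {ι : Type*} (s : Finset ι) {a : ι → ℝ}
    (ha : ∀ i ∈ s, 0 ≤ a i) {e : ι → ℕ} {t : ℕ} (he : ∀ i ∈ s, e i ≤ t) {β : ℝ} (hβ0 : 0 ≤ β)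
    (hβ1 : β ≤ 1) (hsum : ∑ i ∈ s, a i = β ^ (t + 1)) : ∑ i ∈ s, a i / β ^ e i ≤ β := by
  rcases hβ0.eq_or_lt with rfl | hβ
  · have ha0 := (Finset.sum_eq_zero_iff_of_nonneg ha).1 (hsum.trans (zero_pow t.succ_ne_zero))
    exact (Finset.sum_eq_zero fun i hi => by rw [ha0 i hi, zero_div]).le
  calc ∑ i ∈ s, a i / β ^ e i ≤ ∑ i ∈ s, a i / β ^ t :=
        Finset.sum_le_sum fun i hi => div_le_div_of_nonneg_left (ha i hi) (pow_pos hβ _)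
          (pow_le_pow_of_le_one hβ0 hβ1 (he i hi))
    _ = β := by
      rw [← Finset.sum_div, hsum, pow_succ, mul_div_cancel_left₀ _ (pow_ne_zero _ hβ.ne')]

theorem exists_mul_self_mul_pow_eq_neg {ι : Type*} [Fintype ι] (c : ι → ℂ) (hc : ∀ i, c i ≠ 0)
    {e : ι → ℕ} {t : ℕ} (he : ∀ i, e i ≤ t) {β : ℝ} (hβ0 : 0 ≤ β) (hβ1 : β ≤ 1)
    (hβpow : β ^ (t + 1) = ∑ i, ‖c i‖) :
    ∃ α : ι → ℂ, (∀ i, α i * α i * (β : ℂ) ^ e i = -c i) ∧ ∑ i, ‖α i‖ ^ 2 ≤ β := by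
  have hβne : ∀ i, (β : ℂ) ≠ 0 := fun i => Complex.ofReal_ne_zero.2 fun hβz => hc i <|
    norm_eq_zero.1 <| (Finset.sum_eq_zero_iff_of_nonneg fun j _ => norm_nonneg (c j)).1
      (by rw [← hβpow, hβz, zero_pow t.succ_ne_zero]) i (Finset.mem_univ i)
  choose α hα using fun i => IsAlgClosed.exists_eq_mul_self (-c i / (β : ℂ) ^ e i)
  refine ⟨α, fun i => by rw [← hα, div_mul_cancel₀ _ (pow_ne_zero _ (hβne i))], ?_⟩
  calc ∑ i, ‖α i‖ ^ 2 = ∑ i, ‖c i‖ / β ^ e i := by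
        refine Fintype.sum_congr _ _ fun i => ?_
        rw [sq, ← norm_mul, ← hα, norm_div, norm_neg, norm_pow, Complex.norm_real,
          Real.norm_of_nonneg hβ0]
    _ ≤ β := sum_div_pow_le_of_sum_eq_pow _ (fun i _ => norm_nonneg _) (fun i _ => he i) hβ0 hβ1
        hβpow.symm

section Monomial

variable {d : ℕ} (S : Finset (Fin d → ℕ)) (hS : ∀ k ∈ S, k ≠ 0)

noncomputable def monomialWordEquiv (k : S) : Fin ((∑ i, k.1 i) - 1 + 1) ≃ Σ i, Fin (k.1 i) :=
  Fintype.equivOfCardEq <| by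
    have : ∑ i, k.1 i ≠ 0 := fun h0 =>
      hS k.1 k.2 (funext fun i => Finset.sum_eq_zero_iff.1 h0 i (Finset.mem_univ i))
    simp only [Fintype.card_fin, Fintype.card_sigma]
    omega

noncomputable def monomialChainEquiv :
    Matrix.ChainIndex (fun k : S => (∑ i, k.1 i) - 1) ≃ Σ i : Fin d, Fin (∑ k ∈ S, k i) :=
  ((Equiv.sigmaCongrRight (monomialWordEquiv S hS)).trans
    (Equiv.sigmaComm fun (k : S) (i : Fin d) => Fin (k.1 i))).trans
    (Equiv.sigmaCongrRight fun i => Fintype.equivOfCardEq <| by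
      simp only [Fintype.card_sigma, Fintype.card_fin]
      exact Finset.sum_coe_sort S fun k => k i)

theorem prod_monomialChainEquiv_fst {M : Type*} [CommMonoid M] (z : Fin d → M) (k : S) :
    ∏ j, z (monomialChainEquiv S hS ⟨k, j⟩).1 = ∏ i, z i ^ k.1 i :=
  prod_equiv_fst_eq_prod_pow (monomialWordEquiv S hS k) z

end Monomial

/-- Let `p(z) = 1 + ∑_{k ∈ S} p_k z^k` with `S ⊆ ℕ₀^d \ {0}` finite and all
`p_k ≠ 0`, let `t = tdeg p` and `β = (∑ |p_k|)^{1/(t+1)}`. If `β ≤ 1`, then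
`p` admits a determinantal representation `p(z) = det (I - K Zₙ)` with
`n = ∑_{k ∈ S} k` and `‖K‖ ≤ β`. -/
theorem determinantal_representation_norm_bound {d : ℕ}
    (S : Finset (Fin d → ℕ)) (hS : ∀ k ∈ S, k ≠ 0)
    (c : (Fin d → ℕ) → ℂ) (hc : ∀ k ∈ S, c k ≠ 0)
    (t : ℕ) (ht : S.sup (fun k => ∑ i, k i) = t)
    (β : ℝ) (hβ : β = (∑ k ∈ S, ‖c k‖) ^ ((1 : ℝ) / (t + 1)))
    (hβ1 : β ≤ 1) :
    ∃ K : Matrix ((i : Fin d) × Fin (∑ k ∈ S, k i)) ((i : Fin d) × Fin (∑ k ∈ S, k i)) ℂ,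
      ‖K‖ ≤ β ∧
      ∀ z : Fin d → ℂ,
        1 + ∑ k ∈ S, c k * ∏ i, z i ^ k i =
          (1 - K * Matrix.diagonal
            (fun x : (i : Fin d) × Fin (∑ k ∈ S, k i) => z x.1)).det := by
  have hβ0 : 0 ≤ β := hβ ▸ Real.rpow_nonneg (Finset.sum_nonneg fun k _ => norm_nonneg _) _
  have hβpow : β ^ (t + 1) = ∑ k : S, ‖c k‖ := by
    rw [hβ, one_div, ← Nat.cast_add_one, Real.rpow_inv_natCast_pow
      (Finset.sum_nonneg fun k _ => norm_nonneg _) t.succ_ne_zero]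
    exact (Finset.sum_coe_sort S fun k => ‖c k‖).symm
  obtain ⟨α, hcoeff, hnorm⟩ := exists_mul_self_mul_pow_eq_neg (fun k : S => c k)
    (fun k => hc k k.2) (e := fun k => (∑ i, k.1 i) - 1)
    (fun k => (Nat.sub_le _ 1).trans (ht ▸ Finset.le_sup k.2)) hβ0 hβ1 hβpow
  refine ⟨Matrix.reindex (monomialChainEquiv S hS) (monomialChainEquiv S hS)
    (Matrix.chainMatrix _ α α β), ?_, fun z => ?_⟩
  · have hβnorm : ‖(β : ℂ)‖ = β := by rw [Complex.norm_real, Real.norm_of_nonneg hβ0]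
    rw [Matrix.l2_opNorm_reindex]
    refine (Matrix.l2_opNorm_chainMatrix_le α α (β : ℂ) ?_).trans_eq hβnorm
    rw [hβnorm, ← sq]
    exact pow_le_pow_left₀ (Finset.sum_nonneg fun k _ => sq_nonneg _) hnorm 2
  · rw [Matrix.det_one_sub_reindex_mul_diagonal, Matrix.det_one_sub_chainMatrix_mul_diagonal]
    simp only [Function.comp_apply, prod_monomialChainEquiv_fst, hcoeff, neg_mul,
      Finset.sum_neg_distrib, sub_neg_eq_add]
    rw [Finset.sum_coe_sort S fun k => c k * ∏ i, z i ^ k i]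
end
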